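/- arXiv:math/0212206 — 8 statements merged into one kernel-verified Lean document; each statement's English description precedes it below -/
import Mathlib

section
/- In the parametrized braid group Br_n(A), for each k with 2 ≤ k ≤ n−1 and each a ∈ A, there exists an element ω' in the image of the classical braid group Br_n (the subgroup generated by the y_i^0) such that y_k^a · (y_{k-1}^0 y_{k-1}^0) = ω' · y_k^a; moreover ω' is independent of a. -/
/-- Relators of the parametrized braid group `Br_{n+1}(A)` of the introduction:
generators `y i a` for `i : Fin n` (representing `y_{i+1}^a`), `a : A`, with
relations (A1), (A1×A1), (A2). -/
def pRels (n : ℕ) (A : Type) [NonUnitalRing A] : Set (FreeGroup (Fin n × A)) :=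
  {r | (∃ (i : Fin n) (a b : A),
          r = FreeGroup.of (i, a) * FreeGroup.of (i, (0:A)) * FreeGroup.of (i, b) *
              (FreeGroup.of (i, (0:A)) * FreeGroup.of (i, (0:A)) * FreeGroup.of (i, a + b))⁻¹) ∨
       (∃ (i j : Fin n) (a b : A), (i : ℕ) + 2 ≤ (j : ℕ) ∧
          r = FreeGroup.of (i, a) * FreeGroup.of (j, b) *
              (FreeGroup.of (j, b) * FreeGroup.of (i, a))⁻¹) ∨
       (∃ (i j : Fin n) (a b c : A), (i : ℕ) + 1 = (j : ℕ) ∧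
          r = FreeGroup.of (i, a) * FreeGroup.of (j, b) * FreeGroup.of (i, c) *
              (FreeGroup.of (j, c) * FreeGroup.of (i, b + a * c) * FreeGroup.of (j, a))⁻¹)}

/-- The parametrized braid group `Br_{n+1}(A)`. -/
abbrev PBraid (n : ℕ) (A : Type) [NonUnitalRing A] := PresentedGroup (pRels n A)

/-- The generator `y_{i+1}^a` of the parametrized braid group. -/
def y {n : ℕ} {A : Type} [NonUnitalRing A] (i : Fin n) (a : A) : PBraid n A :=
  PresentedGroup.of (i, a)

lemma relA2 {n : ℕ} {A : Type} [NonUnitalRing A] (i j : Fin n)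
    (h : (i : ℕ) + 1 = (j : ℕ)) (a b c : A) :
    y i a * y j b * y i c = y j c * y i (b + a * c) * y j a := by
  have hr : (FreeGroup.of (i, a) * FreeGroup.of (j, b) * FreeGroup.of (i, c) *
      (FreeGroup.of (j, c) * FreeGroup.of (i, b + a * c) * FreeGroup.of (j, a))⁻¹)
      ∈ pRels n A := Or.inr (Or.inr ⟨i, j, a, b, c, h, rfl⟩)
  have h1 : ((QuotientGroup.mk (FreeGroup.of (i, a) * FreeGroup.of (j, b) * FreeGroup.of (i, c) *
      (FreeGroup.of (j, c) * FreeGroup.of (i, b + a * c) * FreeGroup.of (j, a))⁻¹)) :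
      PresentedGroup (pRels n A)) = 1 :=
    (QuotientGroup.eq_one_iff _).mpr (Subgroup.subset_normalClosure hr)
  simp only [QuotientGroup.mk_mul, QuotientGroup.mk_inv] at h1
  exact mul_inv_eq_one.mp h1

/-- In `Br_n(A)`, for adjacent indices `j, k` with `j + 1 = k`
(so `k ≥ 2` in the paper's numbering) and each `a ∈ A`, there exists `ω'`
in the subgroup generated by the elements `y_i^0` (the image of the classical
braid group) such that `y_k^a (y_{k-1}^0 y_{k-1}^0) = ω' y_k^a`, with `ω'`
independent of `a`. -/
theorem stmt4 (n : ℕ) (A : Type) [NonUnitalRing A] (j k : Fin n)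
    (hjk : (j : ℕ) + 1 = (k : ℕ)) :
    ∃ ω' ∈ Subgroup.closure (Set.range fun i : Fin n => y i (0:A)),
      ∀ a : A, y k a * (y j (0:A) * y j (0:A)) = ω' * y k a := by
  have hs : y j (0:A) ∈ Subgroup.closure (Set.range fun i : Fin n => y i (0:A)) :=
    Subgroup.subset_closure ⟨j, rfl⟩
  have ht : y k (0:A) ∈ Subgroup.closure (Set.range fun i : Fin n => y i (0:A)) :=
    Subgroup.subset_closure ⟨k, rfl⟩
  refine ⟨(y j (0:A))⁻¹ * y k (0:A) * y k (0:A) * y j (0:A),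
    by exact mul_mem (mul_mem (mul_mem (inv_mem hs) ht) ht) hs, fun a => ?_⟩
  have e1 : y j (0:A) * y k a * y j (0:A) = y k (0:A) * y j a * y k (0:A) := by
    have := relA2 j k hjk 0 a 0
    simpa using this
  have e2 : y j a * y k (0:A) * y j (0:A) = y k (0:A) * y j (0:A) * y k a := by
    have := relA2 j k hjk a 0 0
    simpa using this
  calc y k a * (y j (0:A) * y j (0:A))
      = (y j (0:A))⁻¹ * (y j (0:A) * y k a * y j (0:A)) * y j (0:A) := by group
    _ = (y j (0:A))⁻¹ * (y k (0:A) * y j a * y k (0:A)) * y j (0:A) := by rw [e1]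
    _ = (y j (0:A))⁻¹ * y k (0:A) * (y j a * y k (0:A) * y j (0:A)) := by group
    _ = (y j (0:A))⁻¹ * y k (0:A) * (y k (0:A) * y j (0:A) * y k a) := by rw [e2]
    _ = (y j (0:A))⁻¹ * y k (0:A) * y k (0:A) * y j (0:A) * y k a := by group
end

section
/- In the parametrized braid group Br_n(A), for each k with 1 ≤ k ≤ n−2 and each a ∈ A, there exists an element ω' in the subgroup generated by the y_i^0 such that y_k^a · (y_{k+1}^0 y_{k+1}^0) = ω' · y_k^a, with ω' independent of a. -/
/-- The relation (A2) holds in `PBraid n A`. -/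
lemma yrel_A2 {n : ℕ} {A : Type} [NonUnitalRing A] {k j : Fin n}
    (hkj : (k : ℕ) + 1 = (j : ℕ)) (a b c : A) :
    y k a * y j b * y k c = y j c * y k (b + a * c) * y j a := by
  have hmem : (FreeGroup.of (k, a) * FreeGroup.of (j, b) * FreeGroup.of (k, c) *
      (FreeGroup.of (j, c) * FreeGroup.of (k, b + a * c) * FreeGroup.of (j, a))⁻¹)
      ∈ pRels n A :=
    Or.inr (Or.inr ⟨k, j, a, b, c, hkj, rfl⟩)
  have h1 : PresentedGroup.mk (pRels n A)
      (FreeGroup.of (k, a) * FreeGroup.of (j, b) * FreeGroup.of (k, c) *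
      (FreeGroup.of (j, c) * FreeGroup.of (k, b + a * c) * FreeGroup.of (j, a))⁻¹) = 1 :=
    (QuotientGroup.eq_one_iff _).2 (Subgroup.subset_normalClosure hmem)
  simp only [map_mul, map_inv] at h1
  exact mul_inv_eq_one.mp h1

/-- In `Br_n(A)`, for adjacent indices `k, j` with `k + 1 = j` and
each `a ∈ A`, there exists `ω'` in the subgroup generated by the `y_i^0` such
that `y_k^a (y_{k+1}^0 y_{k+1}^0) = ω' y_k^a`, with `ω'` independent of `a`. -/
theorem stmt5 (n : ℕ) (A : Type) [NonUnitalRing A] (k j : Fin n)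
    (hkj : (k : ℕ) + 1 = (j : ℕ)) :
    ∃ ω' ∈ Subgroup.closure (Set.range fun i : Fin n => y i (0:A)),
      ∀ a : A, y k a * (y j (0:A) * y j (0:A)) = ω' * y k a := by
  set s : PBraid n A := y k 0 with hs
  set t : PBraid n A := y j 0 with ht
  refine ⟨s * (t * t) * s⁻¹, ?_, ?_⟩
  · have hsmem : s ∈ Subgroup.closure (Set.range fun i : Fin n => y i (0:A)) :=
      Subgroup.subset_closure ⟨k, rfl⟩
    have htmem : t ∈ Subgroup.closure (Set.range fun i : Fin n => y i (0:A)) :=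
      Subgroup.subset_closure ⟨j, rfl⟩
    exact mul_mem (mul_mem hsmem (mul_mem htmem htmem)) (inv_mem hsmem)
  · intro a
    set x : PBraid n A := y k a with hx
    set z : PBraid n A := y j a with hz
    -- braid relation:  s t s = t s t
    have h1 : s * t * s = t * s * t := by
      have := yrel_A2 hkj (0:A) 0 0
      simpa using this
    -- (C):  s z s = t x t
    have h2 : s * z * s = t * x * t := by
      have := yrel_A2 hkj (0:A) a 0
      simpa using this
    -- (B2):  s t x = z s t
    have h3 : s * t * x = z * (s * t) := by
      have := yrel_A2 hkj (0:A) 0 a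
      simpa [mul_assoc] using this
    -- key:  t x t² = s² t x
    have h4 : t * (x * (t * t)) = s * (s * (t * x)) := by
      calc t * (x * (t * t)) = (t * x * t) * t := by group
        _ = (s * z * s) * t := by rw [h2]
        _ = s * (z * (s * t)) := by group
        _ = s * (s * t * x) := by rw [← h3]
        _ = s * (s * (t * x)) := by group
    -- braid consequence:  t s t t = s s t s
    have h6 : t * s * t * t = s * s * (t * s) := by
      calc t * s * t * t = (t * s * t) * t := by group
        _ = (s * t * s) * t := by rw [← h1]
        _ = s * (t * s * t) := by group
        _ = s * (s * t * s) := by rw [← h1]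
        _ = s * s * (t * s) := by group
    -- hence  s t² s⁻¹ = t⁻¹ s² t
    have h5 : s * (t * t) * s⁻¹ = t⁻¹ * (s * s) * t := by
      have : t * (s * (t * t) * s⁻¹) * s = t * (t⁻¹ * (s * s) * t) * s := by
        calc t * (s * (t * t) * s⁻¹) * s = t * s * t * t * s⁻¹ * s := by group
          _ = s * s * (t * s) * s⁻¹ * s := by rw [h6]
          _ = t * (t⁻¹ * (s * s) * t) * s := by group
      have := mul_right_cancel this
      exact mul_left_cancel this
    calc x * (t * t) = t⁻¹ * (t * (x * (t * t))) := by group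
      _ = t⁻¹ * (s * (s * (t * x))) := by rw [h4]
      _ = (t⁻¹ * (s * s) * t) * x := by group
      _ = (s * (t * t) * s⁻¹) * x := by rw [← h5]
end

section
/- Pure Braid Lemma for A_{n-1}: for any generator y_k^a of Br_n(A) and any element ω of the pure braid group PBr_n (viewed inside Br_n(A) via y_i ↦ y_i^0), there exists ω' ∈ Br_n, independent of a, such that y_k^a ω = ω' y_k^a. Consequently y_k^a (y_k^0)^{-1} commutes with every element of PBr_n. -/
/-- Relators of the classical Artin braid group `Br_{n+1}` with generators
`bgen i`, `i : Fin n`. -/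
def bRels (n : ℕ) : Set (FreeGroup (Fin n)) :=
  {r | (∃ i j : Fin n, (i : ℕ) + 2 ≤ (j : ℕ) ∧
          r = FreeGroup.of i * FreeGroup.of j * (FreeGroup.of j * FreeGroup.of i)⁻¹) ∨
       (∃ i j : Fin n, (i : ℕ) + 1 = (j : ℕ) ∧
          r = FreeGroup.of i * FreeGroup.of j * FreeGroup.of i *
              (FreeGroup.of j * FreeGroup.of i * FreeGroup.of j)⁻¹)}

/-- The classical Artin braid group `Br_{n+1}`. -/
abbrev Braid (n : ℕ) := PresentedGroup (bRels n)

/-- The generator `y_{i+1}` of the braid group. -/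
def bgen {n : ℕ} (i : Fin n) : Braid n := PresentedGroup.of i

/-!
Write `σ_i = y_i^0` and `z_i = y_i^a σ_i⁻¹`, and number the strands `0, …, n`. To an ordered pair
of strands `i < j` attach the conjugate `X_{ij}` of `z_i` by `σ_{j-1} ⋯ σ_{i+1}`, and to `j < i`
the conjugate of `σ_j z_j σ_j⁻¹` by `σ_{i-1} ⋯ σ_{j+1}`; so `X_{k,k+1} = z_k`. The braid
relations and a few local consequences of (A1) and (A2) give `σ_t X_{ij} σ_t⁻¹ = X_{s i, s j}`
for the transposition `s = (t t+1)`. Hence every braid `ω` conjugates `X_{ij}` into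
`X_{p(ω) i, p(ω) j}`, and a pure braid commutes with `z_k`. As `σ_k ω σ_k⁻¹` is pure too,
`y_k^a ω = z_k σ_k ω = (σ_k ω σ_k⁻¹) y_k^a`.
-/

open Equiv

section BraidSeq

variable {G : Type*} [Group G] {n : ℕ} {σ u : ℕ → G}

structure IsBraidSeq (n : ℕ) (σ : ℕ → G) : Prop where
  commute : ∀ {i j : ℕ}, i + 2 ≤ j → Commute (σ i) (σ j)
  braid : ∀ {k : ℕ}, k + 1 < n → σ k * σ (k + 1) * σ k = σ (k + 1) * σ k * σ (k + 1)

namespace IsBraidSeq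

theorem commute_of_far (hσ : IsBraidSeq n σ) {i j : ℕ} (h : i + 2 ≤ j ∨ j + 2 ≤ i) :
    Commute (σ i) (σ j) :=
  h.elim hσ.commute fun h => (hσ.commute h).symm

theorem semiconjBy (hσ : IsBraidSeq n σ) {k : ℕ} (hk : k + 1 < n) :
    SemiconjBy (σ k * σ (k + 1)) (σ k) (σ (k + 1)) := by
  rw [SemiconjBy, hσ.braid hk, mul_assoc]

theorem inv_mul_sq_mul (hσ : IsBraidSeq n σ) {k : ℕ} (hk : k + 1 < n) :
    (σ k)⁻¹ * (σ (k + 1) * σ (k + 1)) * σ k =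
      σ (k + 1) * (σ k * σ k) * (σ (k + 1))⁻¹ := by
  have h : (σ k)⁻¹ * σ (k + 1) * σ k = σ (k + 1) * σ k * (σ (k + 1))⁻¹ := by
    calc _ = (σ k)⁻¹ * (σ (k + 1) * σ k * σ (k + 1)) * (σ (k + 1))⁻¹ := by group
      _ = _ := by rw [← hσ.braid hk]; group
  calc _ = ((σ k)⁻¹ * σ (k + 1) * σ k) * ((σ k)⁻¹ * σ (k + 1) * σ k) := by group
    _ = _ := by rw [h]; group

end IsBraidSeq

structure IsBraidCompatible (n : ℕ) (σ u : ℕ → G) : Prop where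
  commute : ∀ {i m : ℕ}, i + 2 ≤ m ∨ m + 2 ≤ i → Commute (σ m) (u i)
  sq : ∀ {k : ℕ}, k < n → Commute (σ k * σ k) (u k)
  shift : ∀ {k : ℕ}, k + 1 < n → SemiconjBy (σ k * σ (k + 1)) (u k) (u (k + 1))
  cross : ∀ {k : ℕ}, k + 1 < n →
    σ k * u (k + 1) * (σ k)⁻¹ = σ (k + 1) * u k * (σ (k + 1))⁻¹
  sq_succ : ∀ {k : ℕ}, k + 1 < n → Commute (σ (k + 1) * σ (k + 1)) (u k)

namespace IsBraidCompatible

theorem succ_eq_conj (hu : IsBraidCompatible n σ u) {k : ℕ} (hk : k + 1 < n) :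
    u (k + 1) = σ k * σ (k + 1) * u k * (σ k * σ (k + 1))⁻¹ := by
  rw [(hu.shift hk).eq]; group

theorem commute_conj_sq (hu : IsBraidCompatible n σ u) {k : ℕ} (hk : k + 1 < n) :
    Commute (σ (k + 1) * (σ k * σ k) * (σ (k + 1))⁻¹) (u k) := by
  have hP : Commute ((σ (k + 1))⁻¹ * (σ k * σ k) * σ (k + 1)) (u k) := by
    have h := hu.cross hk
    rw [hu.succ_eq_conj hk] at h
    refine mul_inv_eq_iff_eq_mul.mp ?_
    calc _ = (σ (k + 1))⁻¹ * (σ k * (σ k * σ (k + 1) * u k * (σ k * σ (k + 1))⁻¹) * (σ k)⁻¹) *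
          σ (k + 1) := by group
      _ = u k := by rw [h]; group
  have hsq := hu.sq_succ hk
  have hQ : σ (k + 1) * (σ k * σ k) * (σ (k + 1))⁻¹ = (σ (k + 1) * σ (k + 1)) *
      ((σ (k + 1))⁻¹ * (σ k * σ k) * σ (k + 1)) * (σ (k + 1) * σ (k + 1))⁻¹ := by group
  rw [hQ]
  exact (hsq.mul_left hP).mul_left hsq.inv_left

theorem conj (hσ : IsBraidSeq n σ) (hu : IsBraidCompatible n σ u) :
    IsBraidCompatible n σ (fun k => σ k * u k * (σ k)⁻¹) where
  commute h := by
    have hσ' := hσ.commute_of_far h.symm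
    exact (hσ'.mul_right (hu.commute h)).mul_right hσ'.inv_right
  sq {k} hk := by
    have hs : Commute (σ k * σ k) (σ k) := (Commute.refl _).mul_left (Commute.refl _)
    exact (hs.mul_right (hu.sq hk)).mul_right hs.inv_right
  shift hk := ((hσ.semiconjBy hk).mul_right (hu.shift hk)).mul_right (hσ.semiconjBy hk).inv_right
  cross {k} hk := by
    calc _ = (σ k * σ (k + 1) * σ k) * σ (k + 1) * u k *
          (σ k * σ (k + 1) * σ k * σ (k + 1))⁻¹ := by rw [hu.succ_eq_conj hk]; group
      _ = σ (k + 1) * σ k * ((σ (k + 1) * σ (k + 1)) * u k * (σ (k + 1) * σ (k + 1))⁻¹) *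
          (σ (k + 1) * σ k)⁻¹ := by rw [hσ.braid hk]; group
      _ = _ := by rw [(hu.sq_succ hk).mul_inv_cancel]; group
  sq_succ {k} hk := by
    convert (hu.commute_conj_sq hk).conj (σ k) using 1
    rw [← hσ.inv_mul_sq_mul hk]
    group

end IsBraidCompatible

def descProd (σ : ℕ → G) (i : ℕ) : ℕ → G
  | 0 => 1
  | j + 1 => if i ≤ j then σ j * descProd σ i j else 1

theorem descProd_succ {i j : ℕ} (h : i ≤ j) : descProd σ i (j + 1) = σ j * descProd σ i j :=
  if_pos h

theorem descProd_of_le {i j : ℕ} (h : j ≤ i) : descProd σ i j = 1 := by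
  cases j with
  | zero => rfl
  | succ j => exact if_neg (by omega)

theorem descProd_eq_mul {i j : ℕ} (h : i < j) :
    descProd σ i j = descProd σ (i + 1) j * σ i := by
  induction j, h using Nat.le_induction with
  | base => rw [descProd_succ le_rfl, descProd_of_le le_rfl, descProd_of_le le_rfl]; group
  | succ j hj ih => rw [descProd_succ (by omega), descProd_succ hj, ih, mul_assoc]

theorem commute_descProd {x : G} {i j : ℕ} (h : ∀ m, i ≤ m → m < j → Commute x (σ m)) :
    Commute x (descProd σ i j) := by
  induction j with
  | zero => exact Commute.one_right x
  | succ j ih =>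
    by_cases hij : i ≤ j
    · rw [descProd_succ hij]
      exact (h j hij j.lt_succ_self).mul_right (ih fun m hm hmj => h m hm (by omega))
    · rw [descProd_of_le (by omega)]
      exact Commute.one_right x

theorem IsBraidSeq.mul_descProd (hσ : IsBraidSeq n σ) {t i j : ℕ} (hit : i ≤ t)
    (htj : t + 2 ≤ j) (hjn : j ≤ n) :
    σ t * descProd σ i j = descProd σ i j * σ (t + 1) := by
  induction j, htj using Nat.le_induction with
  | base =>
    have hc : Commute (σ (t + 1)) (descProd σ i t) :=
      commute_descProd fun m _ hm => hσ.commute_of_far (by omega)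
    rw [descProd_succ (by omega), descProd_succ hit]
    calc _ = (σ t * σ (t + 1) * σ t) * descProd σ i t := by group
      _ = σ (t + 1) * σ t * (σ (t + 1) * descProd σ i t) := by rw [hσ.braid (by omega)]; group
      _ = _ := by rw [hc.eq]; group
  | succ j htj ih =>
    rw [descProd_succ (by omega), ← mul_assoc, (hσ.commute htj).eq, mul_assoc, ih (by omega),
      mul_assoc]

theorem conj_conj_of_mul_eq {g g' w : G} (h : g * w = w * g') (x : G) :
    g * (w * x * w⁻¹) * g⁻¹ = w * (g' * x * g'⁻¹) * w⁻¹ := by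
  calc _ = (g * w) * x * (g * w)⁻¹ := by group
    _ = _ := by rw [h]; group

def descConj (σ u : ℕ → G) (i j : ℕ) : G :=
  descProd σ (i + 1) j * u i * (descProd σ (i + 1) j)⁻¹

theorem descConj_succ_self (i : ℕ) : descConj σ u i (i + 1) = u i := by
  simp [descConj, descProd_of_le]

theorem descConj_succ {i j : ℕ} (h : i < j) :
    descConj σ u i (j + 1) = σ j * descConj σ u i j * (σ j)⁻¹ := by
  rw [descConj, descConj, descProd_succ h]; group

theorem descConj_eq_conj {i j : ℕ} (h : i + 1 < j) :
    descConj σ u i j = descProd σ (i + 2) j * (σ (i + 1) * u i * (σ (i + 1))⁻¹) *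
      (descProd σ (i + 2) j)⁻¹ := by
  rw [descConj, descProd_eq_mul h]; group

theorem commute_descConj {x : G} {i j : ℕ}
    (hσ : ∀ m, i + 1 ≤ m → m < j → Commute x (σ m)) (hu : Commute x (u i)) :
    Commute x (descConj σ u i j) :=
  ((commute_descProd hσ).mul_right hu).mul_right (commute_descProd hσ).inv_right

namespace IsBraidCompatible

theorem commute_sq_descConj (hσ : IsBraidSeq n σ) (hu : IsBraidCompatible n σ u) {i t : ℕ}
    (hit : i < t) (ht : t < n) : Commute (σ t * σ t) (descConj σ u i t) := by
  induction t, hit using Nat.le_induction with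
  | base => rw [descConj_succ_self]; exact hu.sq_succ ht
  | succ t hit ih =>
    have hX : Commute (σ (t + 1)) (descConj σ u i t) :=
      commute_descConj (fun m _ hm => hσ.commute_of_far (by omega)) (hu.commute (by omega))
    have key : Commute (σ (t + 1) * (σ t * σ t) * (σ (t + 1))⁻¹) (descConj σ u i t) :=
      (hX.mul_left (ih (by omega))).mul_left hX.inv_left
    rw [descConj_succ hit]
    convert key.conj (σ t) using 1
    rw [← hσ.inv_mul_sq_mul ht]
    group

theorem conj_descConj (hσ : IsBraidSeq n σ) (hu : IsBraidCompatible n σ u) {t i j : ℕ}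
    (ht : t < n) (hij : i < j) (hjn : j ≤ n) (hne : ¬(i = t ∧ j = t + 1)) :
    σ t * descConj σ u i j * (σ t)⁻¹ =
      descConj σ u (swap t (t + 1) i) (swap t (t + 1) j) := by
  have hW : ∀ {l}, t + 2 ≤ l → Commute (σ t) (descProd σ l j) := fun hl =>
    commute_descProd fun m hm _ => hσ.commute_of_far (by omega)
  rcases (by omega : (t + 2 ≤ i ∨ j < t) ∨ (i < t ∧ t + 2 ≤ j) ∨ i = t + 1 ∨
      (i = t ∧ t + 1 < j) ∨ (i < t ∧ j = t + 1) ∨ (i < t ∧ j = t)) with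
    h | ⟨hi, hj⟩ | hi | ⟨hi, hj⟩ | ⟨hi, hj⟩ | ⟨hi, hj⟩
  · rw [swap_apply_of_ne_of_ne (x := i) (by omega) (by omega),
      swap_apply_of_ne_of_ne (x := j) (by omega) (by omega)]
    exact (commute_descConj (fun m _ _ => hσ.commute_of_far (by omega))
      (hu.commute (by omega))).mul_inv_cancel
  · rw [swap_apply_of_ne_of_ne (x := i) (by omega) (by omega),
      swap_apply_of_ne_of_ne (x := j) (by omega) (by omega), descConj,
      conj_conj_of_mul_eq (hσ.mul_descProd (by omega) hj hjn),
      (hu.commute (by omega)).mul_inv_cancel]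
  · subst i
    rw [swap_apply_right t (t + 1), swap_apply_of_ne_of_ne (x := j) (by omega) (by omega),
      descConj_eq_conj (i := t) (by omega), descConj, conj_conj_of_mul_eq (hW le_rfl).eq,
      hu.cross (by omega)]
  · subst i
    rw [swap_apply_left t (t + 1), swap_apply_of_ne_of_ne (x := j) (by omega) (by omega),
      descConj_eq_conj hj, conj_conj_of_mul_eq (hW le_rfl).eq, descConj]
    congr 2
    rw [hu.succ_eq_conj (by omega)]
    group
  · subst j
    rw [swap_apply_of_ne_of_ne (x := i) (by omega) (by omega), swap_apply_right t (t + 1),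
      descConj_succ hi]
    calc _ = (σ t * σ t) * descConj σ u i t * (σ t * σ t)⁻¹ := by group
      _ = _ := (hu.commute_sq_descConj hσ hi ht).mul_inv_cancel
  · subst j
    rw [swap_apply_of_ne_of_ne (x := i) (by omega) (by omega), swap_apply_left t (t + 1),
      descConj_succ hi]

end IsBraidCompatible

theorem swap_succ_lt_swap_succ {t i j : ℕ} (hij : i < j) (hne : ¬(i = t ∧ j = t + 1)) :
    swap t (t + 1) i < swap t (t + 1) j := by
  simp only [swap_apply_def]
  split_ifs <;> omega

def pairElem (σ u : ℕ → G) (i j : ℕ) : G :=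
  if i < j then descConj σ u i j
  else if j < i then descConj σ (fun k => σ k * u k * (σ k)⁻¹) j i else 1

theorem pairElem_of_lt {i j : ℕ} (h : i < j) : pairElem σ u i j = descConj σ u i j :=
  if_pos h

theorem pairElem_of_gt {i j : ℕ} (h : j < i) :
    pairElem σ u i j = descConj σ (fun k => σ k * u k * (σ k)⁻¹) j i := by
  rw [pairElem, if_neg (lt_asymm h), if_pos h]

theorem pairElem_self (i : ℕ) : pairElem σ u i i = 1 := by
  simp [pairElem]

theorem IsBraidCompatible.conj_pairElem (hσ : IsBraidSeq n σ) (hu : IsBraidCompatible n σ u)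
    {t i j : ℕ} (ht : t < n) (hi : i ≤ n) (hj : j ≤ n) :
    σ t * pairElem σ u i j * (σ t)⁻¹ =
      pairElem σ u (swap t (t + 1) i) (swap t (t + 1) j) := by
  rcases lt_trichotomy i j with hij | rfl | hij
  · by_cases hne : i = t ∧ j = t + 1
    · obtain ⟨rfl, rfl⟩ := hne
      rw [swap_apply_left, swap_apply_right, pairElem_of_lt hij, pairElem_of_gt hij,
        descConj_succ_self, descConj_succ_self]
    · rw [pairElem_of_lt hij, hu.conj_descConj hσ ht hij hj hne,
        pairElem_of_lt (swap_succ_lt_swap_succ hij hne)]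
  · rw [pairElem_self, pairElem_self, mul_one, mul_inv_cancel]
  · by_cases hne : j = t ∧ i = t + 1
    · obtain ⟨rfl, rfl⟩ := hne
      rw [swap_apply_left, swap_apply_right, pairElem_of_gt hij, pairElem_of_lt hij,
        descConj_succ_self, descConj_succ_self]
      calc _ = (σ j * σ j) * u j * (σ j * σ j)⁻¹ := by group
        _ = u j := (hu.sq ht).mul_inv_cancel
    · rw [pairElem_of_gt hij, (hu.conj hσ).conj_descConj hσ ht hij hi hne,
        pairElem_of_gt (swap_succ_lt_swap_succ hij hne)]

end BraidSeq

theorem semiconjBy_of_closure_eq_top {Γ H α : Type*} [Group Γ] [Group H] {s : Set Γ}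
    (hs : Subgroup.closure s = ⊤) (p : Γ →* Perm α) (f : Γ →* H) (x : α → α → H)
    (hx : ∀ g ∈ s, ∀ i j, SemiconjBy (f g) (x i j) (x (p g i) (p g j))) (g : Γ) (i j : α) :
    SemiconjBy (f g) (x i j) (x (p g i) (p g j)) := by
  have hg : g ∈ Subgroup.closure s := hs ▸ Subgroup.mem_top g
  induction hg using Subgroup.closure_induction generalizing i j with
  | mem g hg => exact hx g hg i j
  | one => simp
  | mul g h _ _ hg hh =>
    rw [map_mul, map_mul, Perm.mul_apply, Perm.mul_apply]
    exact (hg _ _).mul_left (hh i j)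
  | inv g _ hg =>
    have h := hg ((p g)⁻¹ i) ((p g)⁻¹ j)
    simp only [Perm.coe_inv, apply_symm_apply] at h
    rw [map_inv, map_inv]
    exact h.inv_symm_left

theorem Fin.val_swap_castSucc_succ {n : ℕ} (t : Fin n) (i : Fin (n + 1)) :
    (swap t.castSucc t.succ i : ℕ) = swap (t : ℕ) (t + 1) i := by
  simpa using (Fin.val_injective.swap_apply t.castSucc t.succ i).symm

section PBraid

variable {n : ℕ} {A : Type} [NonUnitalRing A]

theorem y_A1 (i : Fin n) (a b : A) : y i a * y i 0 * y i b = y i 0 * y i 0 * y i (a + b) :=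
  PresentedGroup.mk_eq_mk_of_mul_inv_mem (Or.inl ⟨i, a, b, rfl⟩)

theorem y_commute {i j : Fin n} (h : (i : ℕ) + 2 ≤ j) (a b : A) : Commute (y i a) (y j b) :=
  PresentedGroup.mk_eq_mk_of_mul_inv_mem (Or.inr (Or.inl ⟨i, j, a, b, h, rfl⟩))

theorem y_A2 {i j : Fin n} (h : (i : ℕ) + 1 = j) (a b c : A) :
    y i a * y j b * y i c = y j c * y i (b + a * c) * y j a :=
  PresentedGroup.mk_eq_mk_of_mul_inv_mem (Or.inr (Or.inr ⟨i, j, a, b, c, h, rfl⟩))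

-- The value `1` for `i ≥ n` lets far commutation hold without any range hypothesis.
def yNat (n : ℕ) (A : Type) [NonUnitalRing A] (i : ℕ) (a : A) : PBraid n A :=
  if h : i < n then y ⟨i, h⟩ a else 1

theorem yNat_of_lt {i : ℕ} (h : i < n) (a : A) : yNat n A i a = y ⟨i, h⟩ a := dif_pos h

theorem yNat_of_le {i : ℕ} (h : n ≤ i) (a : A) : yNat n A i a = 1 := dif_neg (by omega)

theorem yNat_val (i : Fin n) (a : A) : yNat n A i a = y i a := dif_pos i.isLt

theorem yNat_commute {i j : ℕ} (h : i + 2 ≤ j ∨ j + 2 ≤ i) (a b : A) :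
    Commute (yNat n A i a) (yNat n A j b) := by
  wlog hij : i + 2 ≤ j generalizing i j a b
  · exact (this h.symm b a (h.resolve_left hij)).symm
  rcases lt_or_ge j n with hj | hj
  · rw [yNat_of_lt (by omega : i < n), yNat_of_lt hj]
    exact y_commute hij a b
  · rw [yNat_of_le hj]
    exact Commute.one_right _

theorem yNat_A2 {k : ℕ} (hk : k + 1 < n) (a b c : A) :
    yNat n A k a * yNat n A (k + 1) b * yNat n A k c =
      yNat n A (k + 1) c * yNat n A k (b + a * c) * yNat n A (k + 1) a := by
  simp only [yNat_of_lt hk, yNat_of_lt (Nat.lt_of_succ_lt hk)]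
  exact y_A2 rfl a b c

theorem isBraidSeq_yNat : IsBraidSeq n (yNat n A · 0) where
  commute h := yNat_commute (Or.inl h) 0 0
  braid hk := by simpa using yNat_A2 hk (0 : A) 0 0

def zSeq (n : ℕ) (A : Type) [NonUnitalRing A] (a : A) (i : ℕ) : PBraid n A :=
  yNat n A i a * (yNat n A i 0)⁻¹

theorem zSeq_cross (a : A) {k : ℕ} (hk : k + 1 < n) :
    yNat n A k 0 * zSeq n A a (k + 1) * (yNat n A k 0)⁻¹ =
      yNat n A (k + 1) 0 * zSeq n A a k * (yNat n A (k + 1) 0)⁻¹ := by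
  have h := yNat_A2 hk 0 a 0
  rw [mul_zero, add_zero] at h
  calc _ = (yNat n A k 0 * yNat n A (k + 1) a * yNat n A k 0) *
        (yNat n A k 0 * yNat n A (k + 1) 0 * yNat n A k 0)⁻¹ := by simp only [zSeq]; group
    _ = (yNat n A (k + 1) 0 * yNat n A k a * yNat n A (k + 1) 0) *
        (yNat n A (k + 1) 0 * yNat n A k 0 * yNat n A (k + 1) 0)⁻¹ := by
      rw [h, isBraidSeq_yNat.braid hk]
    _ = _ := by simp only [zSeq]; group

theorem commute_sq_succ_zSeq (a : A) {k : ℕ} (hk : k + 1 < n) :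
    Commute (yNat n A (k + 1) 0 * yNat n A (k + 1) 0) (zSeq n A a k) := by
  have h := yNat_A2 hk a 0 0
  rw [mul_zero, add_zero] at h
  have e : (yNat n A (k + 1) 0)⁻¹ * zSeq n A a k * yNat n A (k + 1) 0 =
      yNat n A k 0 * zSeq n A a (k + 1) * (yNat n A k 0)⁻¹ := by
    calc _ = (yNat n A (k + 1) 0)⁻¹ * yNat n A k a * (yNat n A k 0)⁻¹ *
          (yNat n A k 0 * yNat n A (k + 1) 0 * yNat n A k 0) *
          (yNat n A (k + 1) 0)⁻¹ * (yNat n A k 0)⁻¹ := by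
          rw [isBraidSeq_yNat.braid hk]; simp only [zSeq]; group
      _ = yNat n A k 0 * (yNat n A (k + 1) 0 * yNat n A k 0)⁻¹ *
          (yNat n A k a * yNat n A (k + 1) 0 * yNat n A k 0) *
          (yNat n A (k + 1) 0)⁻¹ * (yNat n A k 0)⁻¹ := by group
      _ = _ := by rw [h]; simp only [zSeq]; group
  rw [zSeq_cross a hk] at e
  refine mul_inv_eq_iff_eq_mul.mp ?_
  calc _ = yNat n A (k + 1) 0 *
        ((yNat n A (k + 1) 0)⁻¹ * zSeq n A a k * yNat n A (k + 1) 0) *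
        (yNat n A (k + 1) 0)⁻¹ := by rw [e]; group
    _ = _ := by group

theorem isBraidCompatible_zSeq (a : A) : IsBraidCompatible n (yNat n A · 0) (zSeq n A a) where
  commute h := (yNat_commute h.symm 0 a).mul_right (yNat_commute h.symm 0 0).inv_right
  sq {k} hk := by
    have hy : Commute (yNat n A k 0 * yNat n A k 0) (yNat n A k a) := by
      have h := y_A1 ⟨k, hk⟩ a 0
      rw [add_zero, mul_assoc] at h
      rw [yNat_of_lt hk, yNat_of_lt hk]
      exact h.symm
    have hσ : Commute (yNat n A k 0 * yNat n A k 0) (yNat n A k 0) :=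
      (Commute.refl _).mul_left (Commute.refl _)
    exact hy.mul_right hσ.inv_right
  shift {k} hk := by
    have hy : SemiconjBy (yNat n A k 0 * yNat n A (k + 1) 0) (yNat n A k a)
        (yNat n A (k + 1) a) := by
      simpa [SemiconjBy, mul_assoc] using yNat_A2 hk 0 0 a
    exact hy.mul_right (isBraidSeq_yNat.semiconjBy hk).inv_right
  cross hk := zSeq_cross a hk
  sq_succ hk := commute_sq_succ_zSeq a hk

theorem commute_of_mem_ker (p : Braid n →* Perm (Fin (n + 1)))
    (hp : ∀ i : Fin n, p (bgen i) = swap i.castSucc i.succ) (f : Braid n →* PBraid n A)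
    (hf : ∀ i : Fin n, f (bgen i) = y i (0 : A)) {ω : Braid n} (hω : ω ∈ p.ker) (k : Fin n)
    (a : A) : Commute (f ω) (y k a * (y k 0)⁻¹) := by
  have hX : ∀ g ∈ Set.range (PresentedGroup.of (rels := bRels n)), ∀ i j : Fin (n + 1),
      SemiconjBy (f g) (pairElem (yNat n A · 0) (zSeq n A a) i j)
        (pairElem (yNat n A · 0) (zSeq n A a) (p g i) (p g j)) := by
    rintro _ ⟨t, rfl⟩ i j
    have h := (isBraidCompatible_zSeq a).conj_pairElem isBraidSeq_yNat t.isLt i.is_le j.is_le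
    rw [← Fin.val_swap_castSucc_succ, ← Fin.val_swap_castSucc_succ, yNat_val, ← hf, ← hp] at h
    exact h ▸ SemiconjBy.conj_mk _ _
  have h := semiconjBy_of_closure_eq_top (PresentedGroup.closure_range_of _) p f
    (fun i j : Fin (n + 1) => pairElem (yNat n A · 0) (zSeq n A a) i j) hX ω k.castSucc k.succ
  simp only [MonoidHom.mem_ker.mp hω, Perm.one_apply, Fin.val_castSucc, Fin.val_succ] at h
  rwa [pairElem_of_lt k.val.lt_succ_self, descConj_succ_self, zSeq, yNat_val, yNat_val] at h

end PBraid

/-- Pure Braid Lemma for `A_{n-1}`: for any generator `y_k^a` of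
`Br_n(A)` and any element `ω` of the pure braid group `PBr_n` — the kernel of
the surjection `p : Br_n → S_n`, `y_i ↦ (i, i+1)` — viewed inside `Br_n(A)`
via the homomorphism `f` with `f(y_i) = y_i^0`, there exists `ω' ∈ Br_n`,
independent of `a`, with `y_k^a ω = ω' y_k^a`; consequently `y_k^a (y_k^0)⁻¹`
commutes with every element of `PBr_n`. -/
theorem stmt6 (n : ℕ) (A : Type) [NonUnitalRing A]
    (p : Braid n →* Equiv.Perm (Fin (n + 1)))
    (hp : ∀ i : Fin n, p (bgen i) = Equiv.swap i.castSucc i.succ)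
    (f : Braid n →* PBraid n A)
    (hf : ∀ i : Fin n, f (bgen i) = y i (0:A))
    (ω : Braid n) (hω : ω ∈ p.ker) (k : Fin n) :
    ∃ ω' : Braid n, (∀ a : A, y k a * f ω = f ω' * y k a) ∧
      ∀ a : A, Commute (y k a * (y k (0:A))⁻¹) (f ω) := by
  have hω' : bgen k * ω * (bgen k)⁻¹ ∈ p.ker := p.normal_ker.conj_mem ω hω (bgen k)
  refine ⟨bgen k * ω * (bgen k)⁻¹, fun a => ?_,
    fun a => (commute_of_mem_ker p hp f hf hω k a).symm⟩
  have h := (commute_of_mem_ker p hp f hf hω' k a).eq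
  rw [map_mul, map_mul, map_inv, hf] at h ⊢
  calc y k a * f ω = (y k a * (y k 0)⁻¹) * (y k 0 * f ω * (y k 0)⁻¹) * y k 0 := by group
    _ = y k 0 * f ω * (y k 0)⁻¹ * y k a := by rw [← h]; group
end

section
/- There is a well-defined group homomorphism φ: Br_n(A) → St_n(A) ⋊ Br_n determined by φ(y_i^a) = (x_{i,i+1}(a), y_i), where Br_n acts on St_n(A) through the symmetric group S_n permuting indices. -/
/-- Generators of the Steinberg group: pairs of distinct indices with a ring element. -/
def StGen (n : ℕ) (A : Type) : Type := {p : Fin n × Fin n // p.1 ≠ p.2} × A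

/-- The free-group generator `x_{ij}(a)`. -/
def xg {n : ℕ} {A : Type} (i j : Fin n) (h : i ≠ j) (a : A) : FreeGroup (StGen n A) :=
  FreeGroup.of (⟨(i, j), h⟩, a)

/-- Relators (St0), (St1), (St2) of the Steinberg group `St_n(A)`. -/
def stRels (n : ℕ) (A : Type) [NonUnitalRing A] : Set (FreeGroup (StGen n A)) :=
  {r | (∃ (i j : Fin n) (h : i ≠ j) (a b : A),
          r = xg i j h a * xg i j h b * (xg i j h (a + b))⁻¹) ∨
       (∃ (i j k l : Fin n) (hij : i ≠ j) (hkl : k ≠ l) (a b : A), i ≠ l ∧ j ≠ k ∧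
          r = xg i j hij a * xg k l hkl b * (xg k l hkl b * xg i j hij a)⁻¹) ∨
       (∃ (i j k : Fin n) (hij : i ≠ j) (hjk : j ≠ k) (hik : i ≠ k) (a b : A),
          r = xg i j hij a * xg j k hjk b *
              (xg j k hjk b * xg i k hik (a * b) * xg i j hij a)⁻¹)}

/-- The Steinberg group `St_n(A)`. -/
abbrev Steinberg (n : ℕ) (A : Type) [NonUnitalRing A] := PresentedGroup (stRels n A)

/-- The generator `x_{ij}(a)` of the Steinberg group. -/
def x {n : ℕ} {A : Type} [NonUnitalRing A] (i j : Fin n) (h : i ≠ j) (a : A) :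
    Steinberg n A := PresentedGroup.of (⟨(i, j), h⟩, a)

/-! Both components of `φ` are checked separately on each defining relation of `Br_n(A)`. The
`Br_n`-component of a relation is either trivial or a braid relation. For the Steinberg component,
a braid generator `y_i` permutes the indices by the transposition `(i, i+1)`, which exchanges
`x_{i,i+1}` and `x_{i+1,i}` and fixes every `x_{kl}` with `k, l ∉ {i, i+1}`. So (A1) reduces to
`x_{i,i+1}(0) = 1`, (A1×A1) to (St1), and (A2), for `p, q, r = i, i+1, i+2`, to
`x_{pq}(a) x_{pr}(b) x_{qr}(c) = x_{qr}(c) x_{pr}(b + ac) x_{pq}(a)`, which follows from (St1),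
(St2) and (St0). -/

section Steinberg

variable {n : ℕ} {A : Type} [NonUnitalRing A]

lemma x_add (i j : Fin n) (h : i ≠ j) (a b : A) :
    x i j h a * x i j h b = x i j h (a + b) :=
  PresentedGroup.mk_eq_mk_of_mul_inv_mem (Or.inl ⟨i, j, h, a, b, rfl⟩)

lemma x_zero (i j : Fin n) (h : i ≠ j) : x i j h (0 : A) = 1 :=
  mul_eq_right.mp <| (x_add i j h 0 0).trans (by rw [add_zero])

lemma x_comm {i j k l : Fin n} (hij : i ≠ j) (hkl : k ≠ l) (hil : i ≠ l) (hjk : j ≠ k)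
    (a b : A) : x i j hij a * x k l hkl b = x k l hkl b * x i j hij a :=
  PresentedGroup.mk_eq_mk_of_mul_inv_mem
    (Or.inr (Or.inl ⟨i, j, k, l, hij, hkl, a, b, hil, hjk, rfl⟩))

lemma x_mul_x {i j k : Fin n} (hij : i ≠ j) (hjk : j ≠ k) (hik : i ≠ k) (a b : A) :
    x i j hij a * x j k hjk b = x j k hjk b * x i k hik (a * b) * x i j hij a :=
  PresentedGroup.mk_eq_mk_of_mul_inv_mem (Or.inr (Or.inr ⟨i, j, k, hij, hjk, hik, a, b, rfl⟩))

lemma x_braid {p q r : Fin n} (hpq : p ≠ q) (hpr : p ≠ r) (hqr : q ≠ r) (a b c : A) :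
    x p q hpq a * x p r hpr b * x q r hqr c =
      x q r hqr c * x p r hpr (b + a * c) * x p q hpq a := by
  rw [x_comm hpq hpr hpr hpq.symm, mul_assoc, x_mul_x hpq hqr hpr, ← x_add, ← mul_assoc,
    ← mul_assoc, x_comm hpr hqr hpr hqr.symm, mul_assoc _ (x p r hpr b)]

end Steinberg

lemma bgen_comm {n : ℕ} {i j : Fin n} (h : (i : ℕ) + 2 ≤ j) :
    bgen i * bgen j = bgen j * bgen i :=
  PresentedGroup.mk_eq_mk_of_mul_inv_mem (Or.inl ⟨i, j, h, rfl⟩)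

lemma bgen_braid {n : ℕ} {i j : Fin n} (h : (i : ℕ) + 1 = j) :
    bgen i * bgen j * bgen i = bgen j * bgen i * bgen j :=
  PresentedGroup.mk_eq_mk_of_mul_inv_mem (Or.inr ⟨i, j, h, rfl⟩)

section SemidirectProduct

variable {n : ℕ} {A : Type} [NonUnitalRing A]

/-- Reducible, so that a hypothesis `hact : ActsBySwaps act` is usable as a `simp` lemma. -/
abbrev ActsBySwaps (act : Braid n →* MulAut (Steinberg (n + 1) A)) : Prop :=
  ∀ (i : Fin n) (j k : Fin (n + 1)) (h : j ≠ k) (a : A),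
    act (bgen i) (x j k h a) =
      x (Equiv.swap i.castSucc i.succ j) (Equiv.swap i.castSucc i.succ k)
        ((Equiv.swap i.castSucc i.succ).injective.ne h) a

def yImage (act : Braid n →* MulAut (Steinberg (n + 1) A)) (i : Fin n) (a : A) :
    Steinberg (n + 1) A ⋊[act] Braid n :=
  ⟨x i.castSucc i.succ Fin.castSucc_lt_succ.ne a, bgen i⟩

variable {act : Braid n →* MulAut (Steinberg (n + 1) A)}

lemma yImage_mul_yImage_zero_mul_yImage (hact : ActsBySwaps act) (i : Fin n) (a b : A) :
    yImage act i a * yImage act i 0 * yImage act i b =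
      yImage act i 0 * yImage act i 0 * yImage act i (a + b) := by
  refine SemidirectProduct.ext ?_ rfl
  simp only [yImage, SemidirectProduct.mul_left, SemidirectProduct.mul_right, map_mul,
    MulAut.mul_apply, x_zero, map_one, one_mul, mul_one, hact, Equiv.swap_apply_left,
    Equiv.swap_apply_right, x_add]

lemma yImage_comm (hact : ActsBySwaps act) {i j : Fin n} (hij : (i : ℕ) + 2 ≤ j) (a b : A) :
    yImage act i a * yImage act j b = yImage act j b * yImage act i a := by
  refine SemidirectProduct.ext ?_ (bgen_comm hij)
  simp (disch := simp only [ne_eq, Fin.ext_iff, Fin.val_castSucc, Fin.val_succ]; omega) only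
    [yImage, SemidirectProduct.mul_left, hact, Equiv.swap_apply_of_ne_of_ne]
  have hil : i.castSucc ≠ j.succ :=
    Fin.ne_of_val_ne (by simp only [Fin.val_castSucc, Fin.val_succ]; omega)
  have hjk : i.succ ≠ j.castSucc :=
    Fin.ne_of_val_ne (by simp only [Fin.val_castSucc, Fin.val_succ]; omega)
  exact x_comm _ _ hil hjk a b

lemma yImage_braid (hact : ActsBySwaps act) {i j : Fin n} (hij : (i : ℕ) + 1 = j) (a b c : A) :
    yImage act i a * yImage act j b * yImage act i c =
      yImage act j c * yImage act i (b + a * c) * yImage act j a := by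
  have hji : j.castSucc = i.succ := Fin.ext (by simp only [Fin.val_castSucc, Fin.val_succ]; omega)
  refine SemidirectProduct.ext ?_ (bgen_braid hij)
  simp (disch := simp only [ne_eq, Fin.ext_iff, Fin.val_castSucc, Fin.val_succ]; omega) only
    [yImage, SemidirectProduct.mul_left, SemidirectProduct.mul_right, map_mul, MulAut.mul_apply,
      hact, hji, Equiv.swap_apply_left, Equiv.swap_apply_right, Equiv.swap_apply_of_ne_of_ne]
  exact x_braid _ _ _ a b c

lemma lift_yImage_eq_one_of_mem_pRels (hact : ActsBySwaps act) :
    ∀ r ∈ pRels n A, FreeGroup.lift (fun p : Fin n × A => yImage act p.1 p.2) r = 1 := by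
  rintro r (⟨i, a, b, rfl⟩ | ⟨i, j, a, b, hij, rfl⟩ | ⟨i, j, a, b, c, hij, rfl⟩) <;>
    simp only [map_mul, map_inv, FreeGroup.lift_apply_of, mul_inv_eq_one]
  · exact yImage_mul_yImage_zero_mul_yImage hact i a b
  · exact yImage_comm hact hij a b
  · exact yImage_braid hact hij a b c

end SemidirectProduct

/-- There is a well-defined group homomorphism
`φ : Br_n(A) → St_n(A) ⋊ Br_n` determined by `φ(y_i^a) = (x_{i,i+1}(a), y_i)`,
where `Br_n` acts on `St_n(A)` through the symmetric group `S_n` permuting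
indices (`act` is any such action, characterized on generators). -/
theorem stmt8 (n : ℕ) (A : Type) [NonUnitalRing A]
    (act : Braid n →* MulAut (Steinberg (n + 1) A))
    (hact : ∀ (i : Fin n) (j k : Fin (n + 1)) (h : j ≠ k) (a : A),
        act (bgen i) (x j k h a) =
          x (Equiv.swap i.castSucc i.succ j) (Equiv.swap i.castSucc i.succ k)
            ((Equiv.swap i.castSucc i.succ).injective.ne h) a) :
    ∃ φ : PBraid n A →* Steinberg (n + 1) A ⋊[act] Braid n,
      ∀ (i : Fin n) (a : A),
        φ (y i a) = ⟨x i.castSucc i.succ (Fin.castSucc_lt_succ : i.castSucc < i.succ).ne a, bgen i⟩ :=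
  ⟨PresentedGroup.toGroup (lift_yImage_eq_one_of_mem_pRels hact),
    fun _ _ => PresentedGroup.toGroup.of _⟩
end

section
/- The map φ: Br_n(A) → St_n(A) ⋊ Br_n induced by y_i^a ↦ (x_{i,i+1}(a), y_i) is a group isomorphism. -/
/-!
The inverse of `φ` is assembled from two homomorphisms into `Br_{n+1}(A)`: `Br_{n+1} → Br_{n+1}(A)`,
`y_i ↦ y_i^0`, and `St_{n+1}(A) → Br_{n+1}(A)`, which sends `x_{i,i+1}(a)` to
`z_i(a) = y_i^a (y_i^0)⁻¹` and, for `b < e`, `x_{b,e}(a)` resp. `x_{e,b}(a)` to the conjugate of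
`z_b(a)` resp. `y_b^0 z_b(a) (y_b^0)⁻¹` by the ladder `y_{e-1}^0 ⋯ y_{b+1}^0`.

The heart of the proof is that conjugation by `y_i^0` permutes these elements as the
transposition `(i, i+1)` permutes their indices; this follows from (A1) and (A2), the key point
being that `(y_i^0)²` commutes with every `z_j(a)`. As adjacent transpositions generate
`S_{n+1}`, every Steinberg relation can then be conjugated to indices `0, 1, 2, 3`, where it is a
specialisation of (A2) (or of (A1×A1)). The second map is therefore well defined and intertwines
the action of `Br_{n+1}` with conjugation, so both maps together factor through the semidirect
product; the two composites are the identity on generators.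
-/

open MulAut

theorem MulAut.conj_apply_eq_self_iff {G : Type*} [Group G] {g u : G} :
    conj g u = u ↔ Commute g u := by
  rw [conj_apply, mul_inv_eq_iff_eq_mul]; rfl

theorem MulAut.conj_mul_apply {G : Type*} [Group G] (g h u : G) :
    conj (g * h) u = conj g (conj h u) := by
  rw [map_mul, mul_apply]

theorem MulAut.map_conj_apply {G H : Type*} [Group G] [Group H] (f : G →* H) (g u : G) :
    f (conj g u) = conj (f g) (f u) := by
  simp only [conj_apply, map_mul, map_inv]

theorem Equiv.Perm.induction_swap_castSucc_succ {n : ℕ} {P : Perm (Fin (n + 1)) → Prop}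
    (one : P 1) (swap_mul : ∀ (i : Fin n) σ, P σ → P (swap i.castSucc i.succ * σ))
    (σ : Perm (Fin (n + 1))) : P σ := by
  have hσ : σ ∈ Submonoid.closure (Set.range fun i : Fin n ↦ swap i.castSucc i.succ) := by
    rw [mclosure_swap_castSucc_succ]; trivial
  induction hσ using Submonoid.closure_induction_left with
  | one => exact one
  | mul_left _ hs σ _ ih => obtain ⟨i, rfl⟩ := hs; exact swap_mul i σ ih

theorem Fin.val_swap_castSucc_succ_s9 {n : ℕ} (i : Fin n) (p : Fin (n + 1)) :
    (Equiv.swap i.castSucc i.succ p : ℕ) = Equiv.swap (i : ℕ) (i + 1) p := by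
  simp only [Equiv.swap_apply_def, Fin.ext_iff, Fin.val_castSucc, Fin.val_succ]
  split_ifs <;> rfl

theorem Fin.swap_castSucc_succ_apply_of_ne {n : ℕ} (i : Fin n) {p : Fin (n + 1)}
    (h₀ : (p : ℕ) ≠ i) (h₁ : (p : ℕ) ≠ i + 1) : Equiv.swap i.castSucc i.succ p = p :=
  Fin.ext <| by rw [Fin.val_swap_castSucc_succ_s9, Equiv.swap_apply_of_ne_of_ne h₀ h₁]

theorem Fin.induction_pair_swap_castSucc_succ {n : ℕ} {P : Fin (n + 1) → Fin (n + 1) → Prop}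
    (base : ∀ h : 0 < n, P (Fin.castSucc ⟨0, h⟩) (Fin.succ ⟨0, h⟩))
    (swap : ∀ (i : Fin n) (p q : Fin (n + 1)), P p q →
      P (Equiv.swap i.castSucc i.succ p) (Equiv.swap i.castSucc i.succ q))
    {p q : Fin (n + 1)} (hpq : p ≠ q) : P p q := by
  have hn : 0 < n := Nat.pos_of_ne_zero (by rintro rfl; exact hpq (Fin.ext (by omega)))
  have h₀₁ : (Fin.castSucc ⟨0, hn⟩ : Fin (n + 1)) ≠ Fin.succ ⟨0, hn⟩ := Fin.castSucc_lt_succ.ne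
  obtain ⟨σ, hσ⟩ := Equiv.Perm.exists_extending_pair ![Fin.castSucc ⟨0, hn⟩, Fin.succ ⟨0, hn⟩]
    ![p, q] (by intro s t; fin_cases s <;> fin_cases t <;> simp_all [eq_comm])
    (by intro s t; fin_cases s <;> fin_cases t <;> simp_all [eq_comm])
  have key : P (σ (Fin.castSucc ⟨0, hn⟩)) (σ (Fin.succ ⟨0, hn⟩)) :=
    Equiv.Perm.induction_swap_castSucc_succ (P := fun τ ↦ P (τ _) (τ _)) (base hn)
      (fun i τ ↦ swap i _ _) σ
  rwa [show σ (Fin.castSucc ⟨0, hn⟩) = p from hσ 0, show σ (Fin.succ ⟨0, hn⟩) = q from hσ 1] at key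

namespace Braid

variable {n : ℕ}

theorem bgen_commute {i j : Fin n} (hij : (i : ℕ) + 2 ≤ j) : bgen i * bgen j = bgen j * bgen i :=
  PresentedGroup.mk_eq_mk_of_mul_inv_mem (Or.inl ⟨i, j, hij, rfl⟩)

theorem bgen_braid {i j : Fin n} (hij : (i : ℕ) + 1 = j) :
    bgen i * bgen j * bgen i = bgen j * bgen i * bgen j :=
  PresentedGroup.mk_eq_mk_of_mul_inv_mem (Or.inr ⟨i, j, hij, rfl⟩)

end Braid

namespace Steinberg

variable {m : ℕ} {A : Type} [NonUnitalRing A]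

theorem x_mul_x {i j : Fin m} (h : i ≠ j) (a b : A) : x i j h a * x i j h b = x i j h (a + b) :=
  PresentedGroup.mk_eq_mk_of_mul_inv_mem (Or.inl ⟨i, j, h, a, b, rfl⟩)

theorem x_zero {i j : Fin m} (h : i ≠ j) : x i j h (0 : A) = 1 :=
  mul_eq_left.mp (by rw [x_mul_x h (0 : A) 0, add_zero])

theorem x_commute {i j k l : Fin m} (hij : i ≠ j) (hkl : k ≠ l) (hil : i ≠ l) (hjk : j ≠ k)
    (a b : A) : x i j hij a * x k l hkl b = x k l hkl b * x i j hij a :=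
  PresentedGroup.mk_eq_mk_of_mul_inv_mem
    (Or.inr (Or.inl ⟨i, j, k, l, hij, hkl, a, b, hil, hjk, rfl⟩))

theorem x_chain {i j k : Fin m} (hij : i ≠ j) (hjk : j ≠ k) (hik : i ≠ k) (a b : A) :
    x i j hij a * x j k hjk b = x j k hjk b * x i k hik (a * b) * x i j hij a :=
  PresentedGroup.mk_eq_mk_of_mul_inv_mem (Or.inr (Or.inr ⟨i, j, k, hij, hjk, hik, a, b, rfl⟩))

theorem x_triangle {i j k : Fin m} (hij : i ≠ j) (hik : i ≠ k) (hjk : j ≠ k) (a b c : A) :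
    x i j hij a * x i k hik b * x j k hjk c = x j k hjk c * x i k hik (b + a * c) * x i j hij a :=
  calc x i j hij a * x i k hik b * x j k hjk c
      = x i k hik b * (x i j hij a * x j k hjk c) := by
        rw [x_commute hij hik hik hij.symm, mul_assoc]
    _ = (x i k hik b * x j k hjk c) * x i k hik (a * c) * x i j hij a := by
        rw [x_chain hij hjk hik]; group
    _ = x j k hjk c * x i k hik (b + a * c) * x i j hij a := by
        rw [x_commute hik hjk hik hjk.symm, mul_assoc _ (x i k hik b), x_mul_x]

end Steinberg

namespace PBraid

variable {n : ℕ} {A : Type} [NonUnitalRing A]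

theorem y_mul_y_zero_mul_y (i : Fin n) (a b : A) :
    y i a * y i 0 * y i b = y i 0 * y i 0 * y i (a + b) :=
  PresentedGroup.mk_eq_mk_of_mul_inv_mem (Or.inl ⟨i, a, b, rfl⟩)

theorem y_commute {i j : Fin n} (hij : (i : ℕ) + 2 ≤ j) (a b : A) :
    y i a * y j b = y j b * y i a :=
  PresentedGroup.mk_eq_mk_of_mul_inv_mem (Or.inr (Or.inl ⟨i, j, a, b, hij, rfl⟩))

theorem y_braid {i j : Fin n} (hij : (i : ℕ) + 1 = j) (a b c : A) :
    y i a * y j b * y i c = y j c * y i (b + a * c) * y j a :=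
  PresentedGroup.mk_eq_mk_of_mul_inv_mem (Or.inr (Or.inr ⟨i, j, a, b, c, hij, rfl⟩))

/-- Indexing by `ℕ`, with junk value `1` from `m = n` on, keeps the index arithmetic of the
relations free of `Fin` casts. -/
def Y (m : ℕ) (a : A) : PBraid n A := if h : m < n then y ⟨m, h⟩ a else 1

/-- `T m = y_m^0` plays the role of the braid generator `y_m`. -/
def T (m : ℕ) : PBraid n A := Y m 0

/-- `Z m a = y_m^a (y_m^0)⁻¹` plays the role of the Steinberg generator `x_{m,m+1}(a)`. -/
def Z (m : ℕ) (a : A) : PBraid n A := Y m a * (T m)⁻¹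

theorem Y_of_lt {m : ℕ} (hm : m < n) (a : A) : (Y m a : PBraid n A) = y ⟨m, hm⟩ a := dif_pos hm

theorem Z_mul_T (m : ℕ) (a : A) : (Z m a : PBraid n A) * T m = Y m a := inv_mul_cancel_right _ _

theorem Z_zero (m : ℕ) : (Z m 0 : PBraid n A) = 1 := mul_inv_cancel _

theorem Y_mul_T_mul_Y {m : ℕ} (hm : m < n) (a b : A) :
    (Y m a : PBraid n A) * T m * Y m b = T m * T m * Y m (a + b) := by
  simp only [T, Y_of_lt hm]
  exact y_mul_y_zero_mul_y _ a b

theorem commute_Y {i j : ℕ} (hij : i + 2 ≤ j) (a b : A) :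
    Commute (Y i a : PBraid n A) (Y j b) := by
  by_cases hj : j < n
  · rw [Y_of_lt (by omega), Y_of_lt hj]
    exact y_commute (i := ⟨i, _⟩) (j := ⟨j, hj⟩) hij a b
  · rw [show (Y j b : PBraid n A) = 1 from dif_neg hj]
    exact Commute.one_right _

theorem Y_braid {i : ℕ} (h : i + 1 < n) (a b c : A) :
    (Y i a : PBraid n A) * Y (i + 1) b * Y i c = Y (i + 1) c * Y i (b + a * c) * Y (i + 1) a := by
  simp only [Y_of_lt h, Y_of_lt (show i < n by omega)]
  exact y_braid (i := ⟨i, _⟩) (j := ⟨i + 1, h⟩) rfl a b c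

theorem T_braid {i : ℕ} (h : i + 1 < n) :
    (T i : PBraid n A) * T (i + 1) * T i = T (i + 1) * T i * T (i + 1) := by
  simpa [T] using Y_braid (A := A) h 0 0 0

theorem commute_T_T {i j : ℕ} (hij : i + 2 ≤ j ∨ j + 2 ≤ i) : Commute (T i : PBraid n A) (T j) :=
  hij.elim (commute_Y · 0 0) (commute_Y · 0 0 |>.symm)

theorem commute_T_Z {i j : ℕ} (hij : i + 2 ≤ j ∨ j + 2 ≤ i) (a : A) :
    Commute (T i : PBraid n A) (Z j a) := by
  rcases hij with hij | hij
  · exact (commute_Y hij 0 a).mul_right (commute_Y hij 0 0).inv_right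
  · exact (commute_Y hij a 0).symm.mul_right (commute_Y hij 0 0).symm.inv_right

theorem commute_Z_Z {i j : ℕ} (hij : i + 2 ≤ j) (a b : A) : Commute (Z i a : PBraid n A) (Z j b) :=
  ((commute_Y hij a b).mul_right (commute_Y hij a 0).inv_right).mul_left
    (commute_T_Z (Or.inl hij) b).inv_left

theorem commute_T_sq_Y {m : ℕ} (hm : m < n) (a : A) :
    Commute (T m * T m : PBraid n A) (Y m a) := by
  simpa [Commute, SemiconjBy, T, mul_assoc] using (Y_mul_T_mul_Y (A := A) hm a 0).symm

theorem Z_mul_Z {m : ℕ} (hm : m < n) (a b : A) :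
    (Z m a : PBraid n A) * Z m b = Z m (a + b) := by
  refine mul_left_cancel (a := (T m : PBraid n A) * T m) ?_
  calc (T m : PBraid n A) * T m * (Z m a * Z m b)
      = (T m * T m * Y m a) * (T m)⁻¹ * Y m b * (T m)⁻¹ := by simp only [Z]; group
    _ = (Y m a * T m * Y m b) * (T m)⁻¹ := by rw [(commute_T_sq_Y hm a).eq]; group
    _ = T m * T m * Z m (a + b) := by rw [Y_mul_T_mul_Y hm]; simp only [Z]; group

theorem conj_T_mul_T_Z {i : ℕ} (h : i + 1 < n) (a : A) :
    conj (T i * T (i + 1)) (Z i a : PBraid n A) = Z (i + 1) a := by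
  have hY : (T i * T (i + 1) * Y i a : PBraid n A) = Y (i + 1) a * (T i * T (i + 1)) := by
    simpa [T, mul_assoc] using Y_braid (A := A) h 0 0 a
  calc conj (T i * T (i + 1)) (Z i a : PBraid n A)
      = T i * T (i + 1) * Y i a * (T i * T (i + 1) * T i)⁻¹ := by rw [conj_apply, Z]; group
    _ = Y (i + 1) a * (T i * T (i + 1)) * (T (i + 1) * T i * T (i + 1))⁻¹ := by
        rw [hY, T_braid h]
    _ = Z (i + 1) a := by rw [Z]; group

theorem conj_T_mul_T_Z_succ {i : ℕ} (h : i + 1 < n) (a : A) :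
    conj (T (i + 1) * T i) (Z (i + 1) a : PBraid n A) = Z i a := by
  have hY : (T (i + 1) * T i * Y (i + 1) a : PBraid n A) = Y i a * (T (i + 1) * T i) := by
    simpa [T, mul_assoc] using (Y_braid (A := A) h a 0 0).symm
  calc conj (T (i + 1) * T i) (Z (i + 1) a : PBraid n A)
      = T (i + 1) * T i * Y (i + 1) a * (T (i + 1) * T i * T (i + 1))⁻¹ := by
        rw [conj_apply, Z]; group
    _ = Y i a * (T (i + 1) * T i) * (T i * T (i + 1) * T i)⁻¹ := by rw [hY, T_braid h]
    _ = Z i a := by rw [Z]; group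

theorem conj_T_Z_succ {i : ℕ} (h : i + 1 < n) (a : A) :
    conj (T i) (Z (i + 1) a : PBraid n A) = conj (T (i + 1)) (Z i a) := by
  have hY : (T i * Y (i + 1) a * T i : PBraid n A) = T (i + 1) * Y i a * T (i + 1) := by
    simpa [T] using Y_braid (A := A) h 0 a 0
  calc conj (T i) (Z (i + 1) a : PBraid n A)
      = T i * Y (i + 1) a * T i * (T i * T (i + 1) * T i)⁻¹ := by rw [conj_apply, Z]; group
    _ = T (i + 1) * Y i a * T (i + 1) * (T (i + 1) * T i * T (i + 1))⁻¹ := by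
        rw [hY, T_braid h]
    _ = conj (T (i + 1)) (Z i a) := by rw [conj_apply, Z]; group

/-- The image of `y_m²` is a pure braid, so it has to act trivially on the Steinberg part. -/
theorem commute_T_sq_Z {m j : ℕ} (hm : m < n) (hj : j < n) (a : A) :
    Commute (T m * T m : PBraid n A) (Z j a) := by
  obtain hfar | rfl | rfl | rfl : (m + 2 ≤ j ∨ j + 2 ≤ m) ∨ j = m ∨ j = m + 1 ∨ m = j + 1 := by
    omega
  · exact (commute_T_Z hfar a).mul_left (commute_T_Z hfar a)
  · exact (commute_T_sq_Y hm a).mul_right (Commute.refl _ |>.mul_left (Commute.refl _)).inv_right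
  · rw [← conj_apply_eq_self_iff, conj_mul_apply, conj_T_Z_succ hj, ← conj_mul_apply,
      conj_T_mul_T_Z hj]
  · rw [← conj_apply_eq_self_iff, conj_mul_apply, ← conj_T_Z_succ hm, ← conj_mul_apply,
      conj_T_mul_T_Z_succ hm]

theorem conj_T_inv_Z {m j : ℕ} (hm : m < n) (hj : j < n) (a : A) :
    conj (T m)⁻¹ (Z j a : PBraid n A) = conj (T m) (Z j a) := by
  conv_lhs => rw [← conj_apply_eq_self_iff.mpr (commute_T_sq_Z hm hj a), ← conj_mul_apply]
  rw [inv_mul_cancel_left]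

/-- The relation (A2) in terms of `Z`: the image of the Steinberg relation
`x_{i,i+1}(a) x_{i,i+2}(b) x_{i+1,i+2}(c) = x_{i+1,i+2}(c) x_{i,i+2}(b + ac) x_{i,i+1}(a)`. -/
theorem Z_mul_conj_Z_mul_Z {i : ℕ} (h : i + 1 < n) (a b c : A) :
    (Z i a : PBraid n A) * conj (T (i + 1)) (Z i b) * Z (i + 1) c
      = Z (i + 1) c * conj (T (i + 1)) (Z i (b + a * c)) * Z i a := by
  have e₁ : (T i * Z (i + 1) b : PBraid n A) = conj (T (i + 1)) (Z i b) * T i := by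
    rw [← conj_T_Z_succ h, conj_apply]; group
  have e₂ : (T i * T (i + 1) * Z i c : PBraid n A) = Z (i + 1) c * (T i * T (i + 1)) := by
    rw [← conj_T_mul_T_Z h, conj_apply]; group
  have e₃ : (T (i + 1) * Z i (b + a * c) : PBraid n A)
      = conj (T (i + 1)) (Z i (b + a * c)) * T (i + 1) := by
    rw [conj_apply]; group
  have e₄ : (T (i + 1) * T i * Z (i + 1) a : PBraid n A) = Z i a * (T (i + 1) * T i) := by
    rw [← conj_T_mul_T_Z_succ h, conj_apply]; group
  refine mul_right_cancel (b := (T i * T (i + 1) * T i : PBraid n A)) ?_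
  calc Z i a * conj (T (i + 1)) (Z i b) * Z (i + 1) c * (T i * T (i + 1) * T i)
      = Z i a * conj (T (i + 1)) (Z i b) * (Z (i + 1) c * (T i * T (i + 1))) * T i := by group
    _ = Z i a * (conj (T (i + 1)) (Z i b) * T i) * T (i + 1) * Z i c * T i := by
        rw [← e₂]; group
    _ = Y i a * Y (i + 1) b * Y i c := by simp only [← e₁, ← Z_mul_T]; group
    _ = Y (i + 1) c * Y i (b + a * c) * Y (i + 1) a := Y_braid h a b c
    _ = Z (i + 1) c * (T (i + 1) * Z i (b + a * c)) * T i * Z (i + 1) a * T (i + 1) := by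
        simp only [← Z_mul_T]; group
    _ = Z (i + 1) c * conj (T (i + 1)) (Z i (b + a * c)) * (T (i + 1) * T i * Z (i + 1) a)
          * T (i + 1) := by
        rw [e₃]; group
    _ = Z (i + 1) c * conj (T (i + 1)) (Z i (b + a * c)) * Z i a * (T i * T (i + 1) * T i) := by
        rw [e₄, T_braid h]; group

theorem T_mul_T_mul_T {b : ℕ} (h : b + 1 < n) :
    (T (b + 1) * T (b + 1) * T b : PBraid n A) = T b * T (b + 1) * T b * T b * (T (b + 1))⁻¹ := by
  rw [eq_mul_inv_iff_mul_eq]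
  calc (T (b + 1) * T (b + 1) * T b * T (b + 1) : PBraid n A)
      = T (b + 1) * (T (b + 1) * T b * T (b + 1)) := by group
    _ = T (b + 1) * (T b * T (b + 1) * T b) := by rw [T_braid h]
    _ = T (b + 1) * T b * T (b + 1) * T b := by group
    _ = T b * T (b + 1) * T b * T b := by rw [T_braid h]

def ladder (s : ℕ) : ℕ → PBraid n A
  | 0 => 1
  | e + 1 => if s ≤ e then T e * ladder s e else 1

theorem ladder_of_le {s e : ℕ} (h : e ≤ s) : (ladder s e : PBraid n A) = 1 := by
  cases e with
  | zero => rfl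
  | succ e => exact if_neg (by omega)

theorem ladder_succ {s e : ℕ} (h : s ≤ e) : (ladder s (e + 1) : PBraid n A) = T e * ladder s e :=
  if_pos h

theorem ladder_eq_mul_T {s e : ℕ} (h : s < e) :
    (ladder s e : PBraid n A) = ladder (s + 1) e * T s := by
  induction e, h using Nat.le_induction with
  | base => rw [ladder_succ le_rfl, ladder_of_le le_rfl, ladder_of_le le_rfl, one_mul, mul_one]
  | succ e he ih => rw [ladder_succ (by omega), ih, ladder_succ he, mul_assoc]

theorem commute_T_ladder {i s e : ℕ} (h : i + 2 ≤ s ∨ e + 1 ≤ i) :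
    Commute (T i : PBraid n A) (ladder s e) := by
  induction e with
  | zero => exact Commute.one_right _
  | succ e ih =>
    by_cases hs : s ≤ e
    · rw [ladder_succ hs]
      exact (commute_T_T (by omega)).mul_right (ih (by omega))
    · rw [ladder_of_le (by omega)]
      exact Commute.one_right _

theorem T_mul_ladder {i s e : ℕ} (hs : s ≤ i) (he : i + 2 ≤ e) (hn : e ≤ n) :
    (T i * ladder s e : PBraid n A) = ladder s e * T (i + 1) := by
  induction e, he using Nat.le_induction with
  | base =>
    have hL := commute_T_ladder (n := n) (A := A) (i := i + 1) (s := s) (e := i) (by omega)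
    rw [ladder_succ (by omega), ladder_succ hs]
    calc (T i * (T (i + 1) * (T i * ladder s i)) : PBraid n A)
        = T i * T (i + 1) * T i * ladder s i := by group
      _ = T (i + 1) * T i * (T (i + 1) * ladder s i) := by rw [T_braid (by omega)]; group
      _ = T (i + 1) * (T i * ladder s i) * T (i + 1) := by rw [hL.eq]; group
  | succ e he ih =>
    rw [ladder_succ (by omega), ← mul_assoc, (commute_T_T (by omega)).eq, mul_assoc,
      ih (by omega), mul_assoc]

/-- `base true b a` and `base false b a` stand for `x_{b,b+1}(a)` and `x_{b+1,b}(a)`. -/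
def base (up : Bool) (b : ℕ) (a : A) : PBraid n A := if up then Z b a else conj (T b) (Z b a)

theorem commute_T_base {i b : ℕ} (h : i + 2 ≤ b ∨ b + 2 ≤ i) (up : Bool) (a : A) :
    Commute (T i : PBraid n A) (base up b a) := by
  have hZ := commute_T_Z (n := n) h a
  cases up
  · have hT := commute_T_T (n := n) (A := A) h
    exact (hT.mul_right hZ).mul_right hT.inv_right
  · exact hZ

theorem conj_T_base_self {b : ℕ} (hb : b < n) (up : Bool) (a : A) :
    conj (T b) (base up b a : PBraid n A) = base (!up) b a := by
  cases up
  · rw [base, if_neg Bool.false_ne_true, ← conj_mul_apply,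
      conj_apply_eq_self_iff.mpr (commute_T_sq_Z hb hb a)]
    rfl
  · rfl

theorem conj_T_mul_T_base {b : ℕ} (h : b + 1 < n) (up : Bool) (a : A) :
    conj (T b * T (b + 1)) (base up b a : PBraid n A) = base up (b + 1) a := by
  cases up
  · simp only [base, Bool.false_eq_true, if_false, ← conj_mul_apply]
    rw [T_braid h, mul_assoc, conj_mul_apply, conj_T_mul_T_Z h]
  · exact conj_T_mul_T_Z h a

theorem conj_T_base_succ {b : ℕ} (h : b + 1 < n) (up : Bool) (a : A) :
    conj (T b) (base up (b + 1) a : PBraid n A) = conj (T (b + 1)) (base up b a) := by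
  cases up
  · simp only [base, Bool.false_eq_true, if_false, ← conj_mul_apply]
    have hT : (T (b + 1) * T b * (T (b + 1) * T b) : PBraid n A)
        = T b * T (b + 1) * (T b * T b) := by
      calc (T (b + 1) * T b * (T (b + 1) * T b) : PBraid n A)
          = T (b + 1) * T b * T (b + 1) * T b := by group
        _ = T b * T (b + 1) * (T b * T b) := by rw [← T_braid h]; group
    rw [← conj_T_mul_T_Z_succ h, ← conj_mul_apply, hT, conj_mul_apply (T b * T (b + 1)),
      conj_apply_eq_self_iff.mpr (commute_T_sq_Z (by omega) h a)]
  · exact conj_T_Z_succ h a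

theorem commute_T_sq_base_succ {b : ℕ} (h : b + 1 < n) (up : Bool) (a : A) :
    Commute (T (b + 1) * T (b + 1) : PBraid n A) (base up b a) := by
  cases up
  · rw [← conj_apply_eq_self_iff]
    simp only [base, Bool.false_eq_true, if_false, ← conj_mul_apply]
    rw [T_mul_T_mul_T h, conj_mul_apply, conj_mul_apply, conj_T_inv_Z h (by omega),
      ← conj_T_Z_succ h, ← conj_mul_apply (T b),
      conj_apply_eq_self_iff.mpr (commute_T_sq_Z (by omega) h a), mul_assoc, conj_mul_apply,
      conj_T_mul_T_Z_succ h]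
  · exact commute_T_sq_Z h (by omega) a

/-- For `b < e`, `ladderX true b e a` and `ladderX false b e a` stand for `x_{b,e}(a)` and
`x_{e,b}(a)`: the ladder `T (e - 1) ⋯ T (b + 1)` moves the index `b + 1` of `base` up to `e`. -/
def ladderX (up : Bool) (b e : ℕ) (a : A) : PBraid n A := conj (ladder (b + 1) e) (base up b a)

theorem ladderX_succ {up : Bool} {b e : ℕ} (h : b < e) (a : A) :
    (ladderX up b (e + 1) a : PBraid n A) = conj (T e) (ladderX up b e a) := by
  rw [ladderX, ladderX, ladder_succ h, conj_mul_apply]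

theorem ladderX_self_succ (up : Bool) (b : ℕ) (a : A) :
    (ladderX up b (b + 1) a : PBraid n A) = base up b a := by
  rw [ladderX, ladder_of_le le_rfl, map_one, MulAut.one_apply]

theorem commute_T_ladderX {i b e : ℕ} (hbe : b < e) (he : e ≤ n)
    (hi : i + 2 ≤ b ∨ e + 1 ≤ i ∨ b + 1 ≤ i ∧ i + 2 ≤ e) (up : Bool) (a : A) :
    Commute (T i : PBraid n A) (ladderX up b e a) := by
  rw [← conj_apply_eq_self_iff, ladderX]
  rcases or_assoc.mpr hi with hi | ⟨hbi, hie⟩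
  · rw [← conj_mul_apply, (commute_T_ladder (s := b + 1) (e := e) (by omega)).eq, conj_mul_apply,
      conj_apply_eq_self_iff.mpr (commute_T_base (by omega) up a)]
  · rw [← conj_mul_apply, T_mul_ladder hbi hie he, conj_mul_apply,
      conj_apply_eq_self_iff.mpr (commute_T_base (by omega) up a)]

theorem commute_T_sq_ladderX {up : Bool} {b e : ℕ} (hbe : b < e) (he : e < n) (a : A) :
    Commute (T e * T e : PBraid n A) (ladderX up b e a) := by
  induction e, hbe using Nat.le_induction with
  | base => rw [ladderX_self_succ]; exact commute_T_sq_base_succ he up a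
  | succ e hbe ih =>
    have hT := commute_T_ladderX (n := n) (i := e + 1) hbe (by omega) (by omega) up a
    rw [← conj_apply_eq_self_iff, ladderX_succ hbe, ← conj_mul_apply, T_mul_T_mul_T he,
      conj_mul_apply, conj_apply_eq_self_iff.mpr hT.inv_left, mul_assoc, conj_mul_apply,
      conj_apply_eq_self_iff.mpr (ih (by omega)), conj_mul_apply,
      conj_apply_eq_self_iff.mpr hT]

theorem conj_T_ladderX_succ {b e : ℕ} (hbe : b < e) (he : e < n) (up : Bool) (a : A) :
    conj (T e) (ladderX up b (e + 1) a : PBraid n A) = ladderX up b e a := by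
  rw [ladderX_succ hbe, ← conj_mul_apply,
    conj_apply_eq_self_iff.mpr (commute_T_sq_ladderX hbe he a)]

theorem conj_T_ladderX_left {b e : ℕ} (hbe : b + 1 < e) (he : e ≤ n) (up : Bool) (a : A) :
    conj (T b) (ladderX up b e a : PBraid n A) = ladderX up (b + 1) e a := by
  rw [ladderX, ladderX, ladder_eq_mul_T hbe, ← conj_mul_apply, ← mul_assoc,
    (commute_T_ladder (s := b + 2) (e := e) (Or.inl le_rfl)).eq, mul_assoc, conj_mul_apply,
    conj_T_mul_T_base (by omega)]

theorem conj_T_ladderX_succ_left {b e : ℕ} (hbe : b + 1 < e) (he : e ≤ n) (up : Bool) (a : A) :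
    conj (T b) (ladderX up (b + 1) e a : PBraid n A) = ladderX up b e a := by
  rw [ladderX, ladderX, ladder_eq_mul_T hbe, ← conj_mul_apply,
    (commute_T_ladder (s := b + 2) (e := e) (Or.inl le_rfl)).eq, conj_mul_apply, conj_mul_apply,
    conj_T_base_succ (by omega)]

theorem conj_T_ladderX_self_succ {b : ℕ} (hb : b < n) (up : Bool) (a : A) :
    conj (T b) (ladderX up b (b + 1) a : PBraid n A) = ladderX (!up) b (b + 1) a := by
  rw [ladderX_self_succ, ladderX_self_succ, conj_T_base_self hb]

theorem conj_T_ladderX {i b e : ℕ} (hi : i < n) (hbe : b < e) (he : e ≤ n)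
    (hadj : ¬(b = i ∧ e = i + 1)) (up : Bool) (a : A) :
    conj (T i) (ladderX up b e a : PBraid n A)
      = ladderX up (Equiv.swap i (i + 1) b) (Equiv.swap i (i + 1) e) a := by
  obtain hfar | rfl | rfl | rfl | rfl :
      (i + 2 ≤ b ∨ e + 1 ≤ i ∨ b + 1 ≤ i ∧ i + 2 ≤ e) ∨ e = i ∨ e = i + 1 ∨ b = i ∨ b = i + 1 := by
    omega
  · rw [Equiv.swap_apply_of_ne_of_ne (by omega) (by omega),
      Equiv.swap_apply_of_ne_of_ne (by omega) (by omega)]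
    exact conj_apply_eq_self_iff.mpr (commute_T_ladderX hbe he hfar up a)
  · rw [Equiv.swap_apply_left, Equiv.swap_apply_of_ne_of_ne (by omega) (by omega),
      ladderX_succ hbe]
  · rw [Equiv.swap_apply_right, Equiv.swap_apply_of_ne_of_ne (by omega) (by omega),
      conj_T_ladderX_succ (by omega) hi]
  · rw [Equiv.swap_apply_left, Equiv.swap_apply_of_ne_of_ne (by omega) (by omega),
      conj_T_ladderX_left (by omega) he]
  · rw [Equiv.swap_apply_right, Equiv.swap_apply_of_ne_of_ne (by omega) (by omega),
      conj_T_ladderX_succ_left (by omega) he]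

/-- The image of the Steinberg generator `x_{jk}(a)`. -/
def X (j k : ℕ) (a : A) : PBraid n A := if j < k then ladderX true j k a else ladderX false k j a

theorem X_of_lt {j k : ℕ} (h : j < k) (a : A) : (X j k a : PBraid n A) = ladderX true j k a :=
  if_pos h

theorem X_of_gt {j k : ℕ} (h : k < j) (a : A) : (X j k a : PBraid n A) = ladderX false k j a :=
  if_neg (by omega)

theorem X_self_succ (i : ℕ) (a : A) : (X i (i + 1) a : PBraid n A) = Z i a := by
  rw [X_of_lt (Nat.lt_succ_self i), ladderX_self_succ]; rfl

theorem X_self_add_two (i : ℕ) (a : A) :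
    (X i (i + 2) a : PBraid n A) = conj (T (i + 1)) (Z i a) := by
  rw [X_of_lt (by omega), ladderX_succ (Nat.lt_succ_self i), ladderX_self_succ]; rfl

theorem X_zero (j k : ℕ) : (X j k 0 : PBraid n A) = 1 := by
  unfold X ladderX base
  split_ifs <;> simp [Z_zero]

theorem X_mul_X {j k : ℕ} (hj : j ≤ n) (hk : k ≤ n) (hjk : j ≠ k) (a b : A) :
    (X j k a : PBraid n A) * X j k b = X j k (a + b) := by
  rcases hjk.lt_or_gt with h | h
  · simp only [X_of_lt h, ladderX, base, if_true, ← map_mul, Z_mul_Z (show j < n by omega)]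
  · simp only [X_of_gt h, ladderX, base, Bool.false_eq_true, if_false, ← map_mul,
      Z_mul_Z (show k < n by omega)]

theorem X_triangle {i : ℕ} (h : i + 1 < n) (a b c : A) :
    (X i (i + 1) a : PBraid n A) * X i (i + 2) b * X (i + 1) (i + 2) c
      = X (i + 1) (i + 2) c * X i (i + 2) (b + a * c) * X i (i + 1) a := by
  simpa only [X_self_succ, X_self_add_two] using Z_mul_conj_Z_mul_Z h a b c

theorem conj_T_X {i j k : ℕ} (hi : i < n) (hj : j ≤ n) (hk : k ≤ n) (hjk : j ≠ k) (a : A) :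
    conj (T i) (X j k a : PBraid n A) = X (Equiv.swap i (i + 1) j) (Equiv.swap i (i + 1) k) a := by
  have swap_lt {b e : ℕ} (h : b < e) (hadj : ¬(b = i ∧ e = i + 1)) :
      Equiv.swap i (i + 1) b < Equiv.swap i (i + 1) e := by
    simp only [Equiv.swap_apply_def]; split_ifs <;> omega
  rcases hjk.lt_or_gt with h | h
  · by_cases hadj : j = i ∧ k = i + 1
    · obtain ⟨rfl, rfl⟩ := hadj
      rw [Equiv.swap_apply_left, Equiv.swap_apply_right, X_of_lt h, X_of_gt h,
        conj_T_ladderX_self_succ hi]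
      rfl
    · rw [X_of_lt h, conj_T_ladderX hi h hk hadj, X_of_lt (swap_lt h hadj)]
  · by_cases hadj : k = i ∧ j = i + 1
    · obtain ⟨rfl, rfl⟩ := hadj
      rw [Equiv.swap_apply_left, Equiv.swap_apply_right, X_of_gt h, X_of_lt h,
        conj_T_ladderX_self_succ hi]
      rfl
    · rw [X_of_gt h, conj_T_ladderX hi h hj hadj, X_of_gt (swap_lt h hadj)]

theorem exists_conj_X_eq_X_perm (σ : Equiv.Perm (Fin (n + 1))) :
    ∃ g : PBraid n A, ∀ p q : Fin (n + 1), p ≠ q → ∀ a : A,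
      conj g (X p q a) = X (σ p) (σ q) a := by
  induction σ using Equiv.Perm.induction_swap_castSucc_succ with
  | one => exact ⟨1, fun p q _ a ↦ by simp⟩
  | swap_mul i σ ih =>
    obtain ⟨g, hg⟩ := ih
    refine ⟨T i * g, fun p q hpq a ↦ ?_⟩
    rw [conj_mul_apply, hg p q hpq a, conj_T_X i.isLt (by omega) (by omega)
      (Fin.val_injective.ne (σ.injective.ne hpq)) a, ← Fin.val_swap_castSucc_succ_s9,
      ← Fin.val_swap_castSucc_succ_s9]
    rfl

theorem exists_conj_X_eq_X {m : ℕ} (f : Fin m → Fin (n + 1)) (hf : Function.Injective f) :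
    ∃ g : PBraid n A, ∀ (s t : ℕ) (hs : s < m) (ht : t < m), s ≠ t → ∀ a : A,
      conj g (X s t a) = X (f ⟨s, hs⟩) (f ⟨t, ht⟩) a := by
  have hm := Fin.le_of_injective f hf
  obtain ⟨σ, hσ⟩ :=
    Equiv.Perm.exists_extending_pair (Fin.castLE hm) f (Fin.castLE_injective hm) hf
  obtain ⟨g, hg⟩ := exists_conj_X_eq_X_perm (A := A) σ
  refine ⟨g, fun s t hs ht hst a ↦ ?_⟩
  rw [← hσ, ← hσ]
  exact hg ⟨s, by omega⟩ ⟨t, by omega⟩ (by simpa [Fin.ext_iff] using hst) a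

theorem commute_X_X_same_source {i j l : Fin (n + 1)} (hij : i ≠ j) (hil : i ≠ l) (hjl : j ≠ l)
    (a b : A) : Commute (X i j a : PBraid n A) (X i l b) := by
  have hf : Function.Injective ![i, j, l] := by
    intro s t; fin_cases s <;> fin_cases t <;> simp_all [eq_comm]
  have hcard := Fin.le_of_injective _ hf
  obtain ⟨g, hg⟩ := exists_conj_X_eq_X (A := A) _ hf
  have h := congrArg (conj g) <| show (X 0 1 a : PBraid n A) * X 0 2 b = X 0 2 b * X 0 1 a by
    simpa [X_zero] using X_triangle (n := n) (i := 0) (by omega) a b 0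
  simp only [map_mul] at h
  simpa [hg, Commute, SemiconjBy] using h

theorem commute_X_X_same_target {i j k : Fin (n + 1)} (hij : i ≠ j) (hik : i ≠ k) (hjk : j ≠ k)
    (a b : A) : Commute (X i j a : PBraid n A) (X k j b) := by
  have hf : Function.Injective ![i, k, j] := by
    intro s t; fin_cases s <;> fin_cases t <;> simp_all [eq_comm]
  have hcard := Fin.le_of_injective _ hf
  obtain ⟨g, hg⟩ := exists_conj_X_eq_X (A := A) _ hf
  have h := congrArg (conj g) <| show (X 0 2 a : PBraid n A) * X 1 2 b = X 1 2 b * X 0 2 a by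
    simpa [X_zero] using X_triangle (n := n) (i := 0) (by omega) 0 a b
  simp only [map_mul] at h
  simpa [hg, Commute, SemiconjBy] using h

theorem commute_X_X_of_disjoint {i j k l : Fin (n + 1)} (hij : i ≠ j) (hik : i ≠ k) (hil : i ≠ l)
    (hjk : j ≠ k) (hjl : j ≠ l) (hkl : k ≠ l) (a b : A) :
    Commute (X i j a : PBraid n A) (X k l b) := by
  have hf : Function.Injective ![i, j, k, l] := by
    intro s t; fin_cases s <;> fin_cases t <;> simp_all [eq_comm]
  have hcard := Fin.le_of_injective _ hf
  obtain ⟨g, hg⟩ := exists_conj_X_eq_X (A := A) _ hf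
  have h := congrArg (conj g) <| show (X 0 1 a : PBraid n A) * X 2 3 b = X 2 3 b * X 0 1 a by
    simpa [X_self_succ] using (commute_Z_Z (n := n) le_rfl a b).eq
  simp only [map_mul] at h
  simpa [hg, Commute, SemiconjBy] using h

theorem X_chain {i j k : Fin (n + 1)} (hij : i ≠ j) (hik : i ≠ k) (hjk : j ≠ k) (a b : A) :
    (X i j a : PBraid n A) * X j k b = X j k b * X i k (a * b) * X i j a := by
  have hf : Function.Injective ![i, j, k] := by
    intro s t; fin_cases s <;> fin_cases t <;> simp_all [eq_comm]
  have hcard := Fin.le_of_injective _ hf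
  obtain ⟨g, hg⟩ := exists_conj_X_eq_X (A := A) _ hf
  have h := congrArg (conj g) <|
    show (X 0 1 a : PBraid n A) * X 1 2 b = X 1 2 b * X 0 2 (a * b) * X 0 1 a by
    simpa [X_zero] using X_triangle (n := n) (i := 0) (by omega) a 0 b
  simp only [map_mul] at h
  simpa [hg] using h

def ofStGen (s : StGen (n + 1) A) : PBraid n A := X s.1.1.1 s.1.1.2 s.2

theorem lift_ofStGen_xg (i j : Fin (n + 1)) (h : i ≠ j) (a : A) :
    FreeGroup.lift ofStGen (xg i j h a) = (X i j a : PBraid n A) :=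
  FreeGroup.lift_apply_of

theorem lift_ofStGen_eq_one_of_mem_stRels :
    ∀ r ∈ stRels (n + 1) A, FreeGroup.lift (ofStGen (n := n)) r = 1 := by
  rintro r (⟨i, j, h, a, b, rfl⟩ | ⟨i, j, k, l, hij, hkl, a, b, hil, hjk, rfl⟩ |
    ⟨i, j, k, hij, hjk, hik, a, b, rfl⟩) <;>
    simp only [lift_ofStGen_xg, map_mul, map_inv, mul_inv_eq_one]
  · exact X_mul_X (n := n) (by omega) (by omega) (Fin.val_injective.ne h) a b
  · by_cases hik : i = k <;> by_cases hjl : j = l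
    · subst hik hjl
      rw [X_mul_X (n := n) (by omega) (by omega) (Fin.val_injective.ne hij),
        X_mul_X (n := n) (by omega) (by omega) (Fin.val_injective.ne hij), add_comm a b]
    · subst hik
      exact (commute_X_X_same_source hij hil hjl a b).eq
    · subst hjl
      exact (commute_X_X_same_target hij hik hkl.symm a b).eq
    · exact (commute_X_X_of_disjoint hij hik hil hjk hjl hkl a b).eq
  · exact X_chain hij hik hjk a b

def ofSteinberg : Steinberg (n + 1) A →* PBraid n A :=
  PresentedGroup.toGroup lift_ofStGen_eq_one_of_mem_stRels

theorem ofSteinberg_x (p q : Fin (n + 1)) (h : p ≠ q) (a : A) :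
    ofSteinberg (x p q h a) = (X p q a : PBraid n A) :=
  PresentedGroup.toGroup.of _

def ofBraid : Braid n →* PBraid n A :=
  PresentedGroup.toGroup (f := fun i : Fin n ↦ T i) <| by
    rintro r (⟨i, j, hij, rfl⟩ | ⟨i, j, hij, rfl⟩) <;>
      simp only [map_mul, map_inv, FreeGroup.lift_apply_of, mul_inv_eq_one]
    · exact (commute_T_T (Or.inl hij)).eq
    · rw [← hij]
      exact T_braid (hij ▸ j.isLt)

theorem ofBraid_bgen (i : Fin n) : ofBraid (bgen i) = (T i : PBraid n A) :=
  PresentedGroup.toGroup.of _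

def IsPermAction (act : Braid n →* MulAut (Steinberg (n + 1) A)) : Prop :=
  ∀ (i : Fin n) (j k : Fin (n + 1)) (h : j ≠ k) (a : A),
    act (bgen i) (x j k h a) =
      x (Equiv.swap i.castSucc i.succ j) (Equiv.swap i.castSucc i.succ k)
        ((Equiv.swap i.castSucc i.succ).injective.ne h) a

section Semidirect

open SemidirectProduct

variable {act : Braid n →* MulAut (Steinberg (n + 1) A)}

theorem ofSteinberg_act (hact : IsPermAction act) (β : Braid n) (s : Steinberg (n + 1) A) :
    ofSteinberg (act β s) = conj (ofBraid β) (ofSteinberg s) := by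
  have hβ : β ∈ Subgroup.closure (Set.range (PresentedGroup.of : Fin n → Braid n)) := by
    rw [PresentedGroup.closure_range_of]; trivial
  induction hβ using Subgroup.closure_induction generalizing s with
  | mem _ hβ =>
    obtain ⟨i, rfl⟩ := hβ
    refine DFunLike.congr_fun (PresentedGroup.ext fun ⟨⟨⟨p, q⟩, h⟩, a⟩ ↦ ?_ :
      ofSteinberg.comp (act (bgen i)).toMonoidHom
        = (conj (ofBraid (bgen i))).toMonoidHom.comp ofSteinberg) s
    change ofSteinberg (act (bgen i) (x p q h a))
      = conj (ofBraid (bgen i)) (ofSteinberg (x p q h a))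
    rw [hact i p q h a, ofSteinberg_x, ofSteinberg_x, ofBraid_bgen, conj_T_X i.isLt (by omega)
      (by omega) (Fin.val_injective.ne h), Fin.val_swap_castSucc_succ_s9, Fin.val_swap_castSucc_succ_s9]
  | one => simp
  | mul β γ _ _ ihβ ihγ => rw [map_mul, MulAut.mul_apply, ihβ, ihγ, map_mul, conj_mul_apply]
  | inv β _ ih =>
    have hs := ih (act β⁻¹ s)
    rw [← MulAut.mul_apply, ← map_mul, mul_inv_cancel, map_one, MulAut.one_apply] at hs
    rw [hs, map_inv ofBraid, ← conj_mul_apply, inv_mul_cancel, map_one, MulAut.one_apply]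

def ofSemidirect (hact : IsPermAction act) : Steinberg (n + 1) A ⋊[act] Braid n →* PBraid n A :=
  lift ofSteinberg ofBraid fun β ↦ MonoidHom.ext (ofSteinberg_act hact β)

def semidirectGen (act : Braid n →* MulAut (Steinberg (n + 1) A)) (p : Fin n × A) :
    Steinberg (n + 1) A ⋊[act] Braid n :=
  ⟨x p.1.castSucc p.1.succ (Fin.castSucc_lt_succ : p.1.castSucc < p.1.succ).ne p.2, bgen p.1⟩

theorem lift_semidirectGen_eq_one_of_mem_pRels (hact : IsPermAction act) :
    ∀ r ∈ pRels n A, FreeGroup.lift (semidirectGen act) r = 1 := by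
  unfold IsPermAction at hact
  rintro r (⟨i, a, b, rfl⟩ | ⟨i, j, a, b, hij, rfl⟩ | ⟨i, j, a, b, c, hij, rfl⟩) <;>
    simp only [map_mul, map_inv, FreeGroup.lift_apply_of, mul_inv_eq_one, semidirectGen]
  · ext
    · simp only [mul_left, mul_right, Steinberg.x_zero, map_one, map_mul, MulAut.mul_apply, hact,
        Equiv.swap_apply_left, Equiv.swap_apply_right, mul_one, one_mul]
      exact Steinberg.x_mul_x _ a b
    · rfl
  · have h₁ : Equiv.swap i.castSucc i.succ j.castSucc = j.castSucc :=
      Fin.swap_castSucc_succ_apply_of_ne i (by simp; omega) (by simp; omega)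
    have h₂ : Equiv.swap i.castSucc i.succ j.succ = j.succ :=
      Fin.swap_castSucc_succ_apply_of_ne i (by simp; omega) (by simp; omega)
    have h₃ : Equiv.swap j.castSucc j.succ i.castSucc = i.castSucc :=
      Fin.swap_castSucc_succ_apply_of_ne j (by simp; omega) (by simp; omega)
    have h₄ : Equiv.swap j.castSucc j.succ i.succ = i.succ :=
      Fin.swap_castSucc_succ_apply_of_ne j (by simp; omega) (by simp; omega)
    ext
    · simp only [mul_left, hact, h₁, h₂, h₃, h₄]
      exact Steinberg.x_commute _ _ (Fin.ne_of_val_ne (by simp; omega))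
        (Fin.ne_of_val_ne (by simp; omega)) a b
    · exact Braid.bgen_commute hij
  · have hji : j.castSucc = i.succ := Fin.ext (by simp [← hij])
    have hj : Equiv.swap i.castSucc i.succ j.succ = j.succ :=
      Fin.swap_castSucc_succ_apply_of_ne i (by simp; omega) (by simp; omega)
    have hi : Equiv.swap i.succ j.succ i.castSucc = i.castSucc := by
      rw [← hji]; exact Fin.swap_castSucc_succ_apply_of_ne j (by simp; omega) (by simp; omega)
    ext
    · simp only [mul_left, mul_right, map_mul, MulAut.mul_apply, hact, hji, hj, hi,
        Equiv.swap_apply_left, Equiv.swap_apply_right]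
      exact Steinberg.x_triangle _ _ _ a b c
    · exact Braid.bgen_braid hij

def toSemidirect (hact : IsPermAction act) : PBraid n A →* Steinberg (n + 1) A ⋊[act] Braid n :=
  PresentedGroup.toGroup (lift_semidirectGen_eq_one_of_mem_pRels hact)

theorem toSemidirect_y (hact : IsPermAction act) (i : Fin n) (a : A) :
    toSemidirect hact (y i a) = semidirectGen act (i, a) :=
  PresentedGroup.toGroup.of _

theorem toSemidirect_T (hact : IsPermAction act) {m : ℕ} (hm : m < n) :
    toSemidirect hact (T m) = inr (bgen ⟨m, hm⟩) := by
  rw [T, Y_of_lt hm, toSemidirect_y]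
  ext
  · exact Steinberg.x_zero _
  · rfl

theorem toSemidirect_Z (hact : IsPermAction act) {m : ℕ} (hm : m < n) (a : A) :
    toSemidirect hact (Z m a) = inl (x (Fin.castSucc ⟨m, hm⟩) (Fin.succ ⟨m, hm⟩)
      (Fin.castSucc_lt_succ : Fin.castSucc ⟨m, hm⟩ < _).ne a) := by
  rw [Z, map_mul, map_inv, toSemidirect_T hact hm, Y_of_lt hm, toSemidirect_y, semidirectGen,
    mk_eq_inl_mul_inr, mul_inv_cancel_right]

theorem toSemidirect_X (hact : IsPermAction act) {p q : Fin (n + 1)} (hpq : p ≠ q) (a : A) :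
    toSemidirect hact (X p q a) = inl (x p q hpq a) := by
  refine Fin.induction_pair_swap_castSucc_succ (P := fun p q ↦ ∀ (h : p ≠ q) (a : A),
    toSemidirect hact (X p q a) = inl (x p q h a)) (fun hn _ a ↦ ?_)
    (fun i p q ih h a ↦ ?_) hpq hpq a
  · rw [Fin.val_castSucc, Fin.val_succ, X_self_succ]
    exact toSemidirect_Z hact hn a
  · have hpq : p ≠ q := fun e ↦ h (by rw [e])
    rw [Fin.val_swap_castSucc_succ_s9, Fin.val_swap_castSucc_succ_s9, ← conj_T_X i.isLt (by omega)
      (by omega) (Fin.val_injective.ne hpq), map_conj_apply, ih hpq, toSemidirect_T hact i.isLt,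
      conj_apply, ← map_inv, ← inl_aut, Fin.eta, hact]

theorem ofSemidirect_comp_toSemidirect (hact : IsPermAction act) :
    (ofSemidirect hact).comp (toSemidirect hact) = MonoidHom.id (PBraid n A) :=
  PresentedGroup.ext fun ⟨i, a⟩ ↦ by
    change ofSemidirect hact (toSemidirect hact (y i a)) = y i a
    rw [toSemidirect_y, semidirectGen, mk_eq_inl_mul_inr, map_mul, ofSemidirect, lift_inl,
      lift_inr, ofSteinberg_x, ofBraid_bgen, Fin.val_castSucc, Fin.val_succ, X_self_succ,
      Z_mul_T, Y_of_lt]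

theorem toSemidirect_comp_ofSemidirect (hact : IsPermAction act) :
    (toSemidirect hact).comp (ofSemidirect hact) = MonoidHom.id _ := by
  refine hom_ext (PresentedGroup.ext fun ⟨⟨⟨p, q⟩, h⟩, a⟩ ↦ ?_) (PresentedGroup.ext fun i ↦ ?_)
  · change toSemidirect hact (ofSemidirect hact (inl (x p q h a))) = inl (x p q h a)
    rw [ofSemidirect, lift_inl, ofSteinberg_x, toSemidirect_X hact h]
  · change toSemidirect hact (ofSemidirect hact (inr (bgen i))) = inr (bgen i)
    rw [ofSemidirect, lift_inr, ofBraid_bgen, toSemidirect_T hact i.isLt]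

end Semidirect

end PBraid

/-- The map `φ : Br_n(A) → St_n(A) ⋊ Br_n` induced by
`y_i^a ↦ (x_{i,i+1}(a), y_i)` is a group isomorphism, `Br_n` acting on
`St_n(A)` via `S_n` by permuting indices. -/
theorem stmt9 (n : ℕ) (A : Type) [NonUnitalRing A]
    (act : Braid n →* MulAut (Steinberg (n + 1) A))
    (hact : ∀ (i : Fin n) (j k : Fin (n + 1)) (h : j ≠ k) (a : A),
        act (bgen i) (x j k h a) =
          x (Equiv.swap i.castSucc i.succ j) (Equiv.swap i.castSucc i.succ k)
            ((Equiv.swap i.castSucc i.succ).injective.ne h) a) :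
    ∃ φ : PBraid n A ≃* Steinberg (n + 1) A ⋊[act] Braid n,
      ∀ (i : Fin n) (a : A),
        φ (y i a) = ⟨x i.castSucc i.succ (Fin.castSucc_lt_succ : i.castSucc < i.succ).ne a, bgen i⟩ :=
  ⟨(PBraid.toSemidirect hact).toMulEquiv (PBraid.ofSemidirect hact)
    (PBraid.ofSemidirect_comp_toSemidirect hact) (PBraid.toSemidirect_comp_ofSemidirect hact),
    PBraid.toSemidirect_y hact⟩
end

section
/- In Br_n(A) (n ≥ 3), with u(a) = y_1^a (y_1^0)^{-1} and v(b) = y_2^0 y_1^b (y_1^0)^{-1} (y_2^0)^{-1}, one has u(a) v(b) = v(b) u(a) for all a, b ∈ A (the Steinberg relation (St1) for x_{12} and x_{13} is preserved). -/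
lemma pbraid_rel_one {n : ℕ} {A : Type} [NonUnitalRing A] {r : FreeGroup (Fin n × A)}
    (h : r ∈ pRels n A) : PresentedGroup.mk (pRels n A) r = 1 :=
  (QuotientGroup.eq_one_iff r).mpr (Subgroup.subset_normalClosure h)

/-- Relation (A2) in the parametrized braid group. -/
lemma rel_a2 {n : ℕ} {A : Type} [NonUnitalRing A] (i j : Fin n)
    (hij : (i : ℕ) + 1 = (j : ℕ)) (a b c : A) :
    y i a * y j b * y i c = y j c * y i (b + a * c) * y j a := by
  have h := pbraid_rel_one (n := n) (A := A)
    (Or.inr (Or.inr ⟨i, j, a, b, c, hij, rfl⟩))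
  simp only [map_mul, map_inv, mul_inv_eq_one] at h
  exact h

/-- In `Br_n(A)` (n ≥ 3 strands), with
`u a = y_1^a (y_1^0)⁻¹` and `v b = y_2^0 y_1^b (y_1^0)⁻¹ (y_2^0)⁻¹`,
one has `u a * v b = v b * u a` for all `a, b ∈ A`. -/
theorem stmt12 (n : ℕ) (hn : 2 ≤ n) (A : Type) [NonUnitalRing A] (a b : A) :
    let y1 : A → PBraid n A := fun c => y (⟨0, by omega⟩ : Fin n) c
    let y2 : A → PBraid n A := fun c => y (⟨1, by omega⟩ : Fin n) c
    let u : A → PBraid n A := fun c => y1 c * (y1 0)⁻¹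
    let v : A → PBraid n A := fun c => y2 0 * y1 c * (y1 0)⁻¹ * (y2 0)⁻¹
    u a * v b = v b * u a := by
  intro y1 y2 u v
  have R : ∀ (x z w : A), y1 x * y2 z * y1 w = y2 w * y1 (z + x * w) * y2 x := by
    intro x z w
    exact rel_a2 (⟨0, by omega⟩ : Fin n) (⟨1, by omega⟩ : Fin n) rfl x z w
  set s : PBraid n A := y1 0 with hs
  set t : PBraid n A := y2 0 with ht
  -- (∗): s * y2 z * s = t * y1 z * t
  have star : ∀ z : A, s * y2 z * s = t * y1 z * t := by
    intro z
    have := R 0 z 0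
    simpa using this
  -- (∗∗): y1 x * t * s = t * s * y2 x
  have dstar : ∀ x : A, y1 x * t * s = t * s * y2 x := by
    intro x
    have := R x 0 0
    simpa using this
  -- (II): y1 x * y2 z * s = t * y1 z * y2 x
  have relII : ∀ x z : A, y1 x * y2 z * s = t * y1 z * y2 x := by
    intro x z
    have := R x z 0
    simpa using this
  -- braid relation
  have braid : s * t * s = t * s * t := by
    have := star 0
    simpa using this
  have hy1a : y1 a = t * s * y2 a * s⁻¹ * t⁻¹ := by
    rw [← dstar a]; group
  show y1 a * (y1 0)⁻¹ * (y2 0 * y1 b * (y1 0)⁻¹ * (y2 0)⁻¹)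
      = y2 0 * y1 b * (y1 0)⁻¹ * (y2 0)⁻¹ * (y1 a * (y1 0)⁻¹)
  rw [← hs, ← ht]
  calc y1 a * s⁻¹ * (t * y1 b * s⁻¹ * t⁻¹)
      = y1 a * s⁻¹ * ((t * y1 b * t) * (t⁻¹ * s⁻¹ * t⁻¹)) := by group
    _ = y1 a * s⁻¹ * ((s * y2 b * s) * (t⁻¹ * s⁻¹ * t⁻¹)) := by rw [star]
    _ = y1 a * y2 b * (s * (t * s * t)⁻¹) := by group
    _ = y1 a * y2 b * (s * (s * t * s)⁻¹) := by rw [braid]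
    _ = y1 a * y2 b * s * (s⁻¹ * t⁻¹ * s⁻¹) := by group
    _ = t * y1 b * y2 a * (s⁻¹ * t⁻¹ * s⁻¹) := by rw [relII]
    _ = (t * y1 b * t) * (t⁻¹ * y2 a) * (s⁻¹ * t⁻¹ * s⁻¹) := by group
    _ = (s * y2 b * s) * (t⁻¹ * y2 a) * (s⁻¹ * t⁻¹ * s⁻¹) := by rw [star]
    _ = (s * y2 b * s) * (t⁻¹ * s⁻¹ * t⁻¹) * (t * s * y2 a * s⁻¹ * t⁻¹) * s⁻¹ := by group
    _ = (t * y1 b * t) * (t⁻¹ * s⁻¹ * t⁻¹) * (t * s * y2 a * s⁻¹ * t⁻¹) * s⁻¹ := by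
          rw [star]
    _ = t * y1 b * s⁻¹ * t⁻¹ * ((t * s * y2 a * s⁻¹ * t⁻¹) * s⁻¹) := by group
    _ = t * y1 b * s⁻¹ * t⁻¹ * (y1 a * s⁻¹) := by rw [← hy1a]
end

section
/- In Br_n(A), for any k with 1 ≤ k ≤ n−2 and a ∈ A, there exists ω' ∈ Br_n (independent of a) such that y_k^a · y_{k+1}^0 y_k^0 y_k^0 y_{k+1}^0 = ω' · y_k^a. -/
lemma rel_eq {n : ℕ} {A : Type} [NonUnitalRing A] {r : FreeGroup (Fin n × A)}
    (h : r ∈ pRels n A) : (QuotientGroup.mk r : PBraid n A) = 1 := by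
  rw [QuotientGroup.eq_one_iff]
  exact Subgroup.subset_normalClosure h

/-- In `Br_n(A)`, for adjacent indices `k, j` with `k + 1 = j`
and each `a ∈ A`, there exists `ω'` in the subgroup generated by the `y_i^0`
(the classical braid group) such that
`y_k^a · y_{k+1}^0 y_k^0 y_k^0 y_{k+1}^0 = ω' · y_k^a`, with `ω'` independent
of `a`. -/
theorem stmt15 (n : ℕ) (A : Type) [NonUnitalRing A] (k j : Fin n)
    (hkj : (k : ℕ) + 1 = (j : ℕ)) :
    ∃ ω' ∈ Subgroup.closure (Set.range fun i : Fin n => y i (0:A)),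
      ∀ a : A, y k a * (y j (0:A) * y k (0:A) * y k (0:A) * y j (0:A)) = ω' * y k a := by
  refine ⟨y j 0 * y k 0 * y k 0 * y j 0, ?_, ?_⟩
  · have hm : ∀ i : Fin n, y i (0:A) ∈
        Subgroup.closure (Set.range fun i : Fin n => y i (0:A)) := fun i =>
      Subgroup.subset_closure ⟨i, rfl⟩
    exact mul_mem (mul_mem (mul_mem (hm j) (hm k)) (hm k)) (hm j)
  · intro a
    have h1 : y k a * y j 0 * y k 0 = y j 0 * y k 0 * y j a := by
      have := relA2 k j hkj a 0 0
      simpa using this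
    have h2 : y j a * y k 0 * y j 0 = y k 0 * y j 0 * y k a := by
      have := relA2 k j hkj 0 0 a
      simp only [zero_mul, add_zero] at this
      exact this.symm
    calc y k a * (y j 0 * y k 0 * y k 0 * y j 0)
        = (y k a * y j 0 * y k 0) * (y k 0 * y j 0) := by group
      _ = (y j 0 * y k 0 * y j a) * (y k 0 * y j 0) := by rw [h1]
      _ = (y j 0 * y k 0) * (y j a * y k 0 * y j 0) := by group
      _ = (y j 0 * y k 0) * (y k 0 * y j 0 * y k a) := by rw [h2]
      _ = y j 0 * y k 0 * y k 0 * y j 0 * y k a := by group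
end

section
/- Lemma (twine, in the braid group of type D_n): in Br(D_n), with generators σ_{2}, σ_{2'}, σ_3, …, σ_n satisfying the braid relations of the D_n Dynkin diagram, one has σ_3 σ_{2'} σ_4 σ_3 σ_5 σ_4 ⋯ σ_{n-1} σ_{n-2} σ_n σ_n = σ_3 σ_4 σ_5 ⋯ σ_{n-1} σ_n σ_n σ_{2'} σ_3 σ_4 ⋯ σ_{n-2}. -/
/-- Relators of the braid group `Br(D_n)`. Generators are indexed by
`Option (Fin (n-1))`: `some i` is the simple root `α_{i+2}` (so `some 0 = α_2,
…, some (n-2) = α_n`) and `none` is `α_{2'}`, which is attached only to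
`α_3 = some 1` in the Dynkin diagram. Relators: `σ_α σ_β = σ_β σ_α` when
`α, β` are not connected, `σ_α σ_β σ_α = σ_β σ_α σ_β` when connected. -/
def dRels (m : ℕ) : Set (FreeGroup (Option (Fin m))) :=
  {r | (∃ i j : Fin m, (i : ℕ) + 2 ≤ (j : ℕ) ∧
          r = FreeGroup.of (some i) * FreeGroup.of (some j) *
              (FreeGroup.of (some j) * FreeGroup.of (some i))⁻¹) ∨
       (∃ j : Fin m, (j : ℕ) ≠ 1 ∧
          r = FreeGroup.of none * FreeGroup.of (some j) *
              (FreeGroup.of (some j) * FreeGroup.of none)⁻¹) ∨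
       (∃ i j : Fin m, (i : ℕ) + 1 = (j : ℕ) ∧
          r = FreeGroup.of (some i) * FreeGroup.of (some j) * FreeGroup.of (some i) *
              (FreeGroup.of (some j) * FreeGroup.of (some i) * FreeGroup.of (some j))⁻¹) ∨
       (∃ j : Fin m, (j : ℕ) = 1 ∧
          r = FreeGroup.of none * FreeGroup.of (some j) * FreeGroup.of none *
              (FreeGroup.of (some j) * FreeGroup.of none * FreeGroup.of (some j))⁻¹)}

/-- The braid group `Br(D_n)` of type `D_n`. -/
abbrev BraidD (n : ℕ) := PresentedGroup (dRels (n - 1))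

/-- The generator of `Br(D_n)` attached to a simple root (`none` is `α_{2'}`). -/
def sD (n : ℕ) (g : Option (Fin (n - 1))) : BraidD n := PresentedGroup.of g

/-- The generator `σ_k` of `Br(D_n)` for `2 ≤ k ≤ n` (junk value `1` out of range). -/
def tD (n : ℕ) (k : ℕ) : BraidD n :=
  if h : k - 2 < n - 1 then sD n (some ⟨k - 2, h⟩) else 1


section Aux
variable {G : Type*} [Group G]

lemma relq {α : Type*} {rels : Set (FreeGroup α)} {r : FreeGroup α} (h : r ∈ rels) :
    PresentedGroup.mk rels r = 1 :=
  (QuotientGroup.eq_one_iff r).mpr (Subgroup.subset_normalClosure h)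

lemma rel_eq_s18 {α : Type*} {rels : Set (FreeGroup α)} {a b : FreeGroup α} (h : a * b⁻¹ ∈ rels) :
    PresentedGroup.mk rels a = PresentedGroup.mk rels b := by
  have := relq h
  rw [map_mul, map_inv, mul_inv_eq_one] at this
  exact this

lemma swap1 (A B R x y : G) (hb : B * x = x * B) (hR : x * R = R * x) :
    A * B * R * (x * y) = A * x * B * (R * y) := by
  rw [show A * B * R * (x * y) = A * B * (R * x) * y by group, ← hR,
      show A * B * (x * R) * y = A * (B * x) * (R * y) by group, hb]
  group

lemma swap2 (Q B R x : G) (hb : B * x = x * B) (hR : x * R = R * x) :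
    Q * B * R * x * x = Q * x * x * B * R := by
  rw [show Q * B * R * x * x = Q * B * (R * x) * x by group, ← hR,
      show Q * B * (x * R) * x = Q * (B * x) * (R * x) by group, ← hR, hb,
      show Q * (x * B) * (x * R) = Q * x * (B * x) * R by group, hb]
  group

end Aux

lemma sD_eq (n : ℕ) (g : Option (Fin (n - 1))) :
    sD n g = PresentedGroup.mk (dRels (n - 1)) (FreeGroup.of g) := rfl

lemma comm_ss (n : ℕ) (i j : Fin (n - 1)) (h : (i : ℕ) + 2 ≤ (j : ℕ)) :
    Commute (sD n (some i)) (sD n (some j)) := by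
  have := rel_eq_s18 (rels := dRels (n - 1)) (Or.inl ⟨i, j, h, rfl⟩)
  simpa [sD_eq, Commute, SemiconjBy] using this

lemma comm_ns (n : ℕ) (j : Fin (n - 1)) (h : (j : ℕ) ≠ 1) :
    Commute (sD n none) (sD n (some j)) := by
  have := rel_eq_s18 (rels := dRels (n - 1)) (Or.inr (Or.inl ⟨j, h, rfl⟩))
  simpa [sD_eq, Commute, SemiconjBy] using this

lemma t_comm (n j k : ℕ) (h2 : 2 ≤ j) (h : j + 2 ≤ k) :
    Commute (tD n j) (tD n k) := by
  unfold tD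
  split_ifs with h1 h2' h2''
  · exact comm_ss n _ _ (by simp only [Fin.val_mk]; omega)
  · exact Commute.one_right _
  · exact Commute.one_left _
  · exact Commute.one_left _

lemma n_comm (n k : ℕ) (h : k ≠ 3) :
    Commute (sD n none) (tD n k) := by
  unfold tD
  split_ifs with h1
  · exact comm_ns n _ (by simp only [Fin.val_mk]; omega)
  · exact Commute.one_right _

lemma range_succ_prod {M : Type*} [Monoid M] (f : ℕ → M) (k : ℕ) :
    ((List.range (k + 1)).map f).prod = ((List.range k).map f).prod * f k := by
  rw [List.range_succ]
  simp

lemma prod_succ (n k : ℕ) :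
    (((List.range (k + 1)).map fun m => tD n (3 + m)).prod) =
      (((List.range k).map fun m => tD n (3 + m)).prod) * tD n (3 + k) :=
  range_succ_prod _ k

lemma key (n k : ℕ) :
    tD n 3 * sD n none *
        (((List.range k).map fun m => tD n (4 + m) * tD n (3 + m)).prod) =
      (((List.range (k + 1)).map fun m => tD n (3 + m)).prod) * sD n none *
        (((List.range k).map fun m => tD n (3 + m)).prod) := by
  induction k with
  | zero => rw [prod_succ]; simp
  | succ k ih =>
      rw [range_succ_prod (fun m => tD n (4 + m) * tD n (3 + m)) k,
        ← mul_assoc (tD n 3 * sD n none), ih,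
        prod_succ n (k + 1), prod_succ n k, show 3 + (k + 1) = 4 + k by omega]
      have hR : Commute (tD n (4 + k)) (((List.range k).map fun m => tD n (3 + m)).prod) := by
        apply Commute.list_prod_right
        intro x hx
        simp only [List.mem_map, List.mem_range] at hx
        obtain ⟨m, hm, rfl⟩ := hx
        exact (t_comm n (3 + m) (4 + k) (by omega) (by omega)).symm
      have hb : Commute (sD n none) (tD n (4 + k)) := n_comm n _ (by omega)
      exact swap1 _ _ _ _ _ hb.eq hR.eq

/-- Lemma "twine" in `Br(D_n)`:
`σ_3 σ_{2'} σ_4 σ_3 σ_5 σ_4 ⋯ σ_{n-1} σ_{n-2} σ_n σ_n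
 = σ_3 σ_4 σ_5 ⋯ σ_{n-1} σ_n σ_n σ_{2'} σ_3 σ_4 ⋯ σ_{n-2}`. -/
theorem stmt18 (n : ℕ) (hn : 4 ≤ n) :
    tD n 3 * sD n none *
        (((List.range (n - 4)).map fun m => tD n (4 + m) * tD n (3 + m)).prod) *
        tD n n * tD n n =
      (((List.range (n - 2)).map fun m => tD n (3 + m)).prod) * tD n n *
        sD n none * (((List.range (n - 4)).map fun m => tD n (3 + m)).prod) := by
  have hk := key n (n - 4)
  have h1 : n - 4 + 1 = n - 3 := by omega
  rw [h1] at hk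
  have hQ : (((List.range (n - 2)).map fun m => tD n (3 + m)).prod) =
      (((List.range (n - 3)).map fun m => tD n (3 + m)).prod) * tD n n := by
    have h2 : n - 2 = (n - 3) + 1 := by omega
    rw [h2, prod_succ, show 3 + (n - 3) = n by omega]
  have hbn : Commute (sD n none) (tD n n) := n_comm n n (by omega)
  have hRn : Commute (tD n n) (((List.range (n - 4)).map fun m => tD n (3 + m)).prod) := by
    apply Commute.list_prod_right
    intro x hx
    simp only [List.mem_map, List.mem_range] at hx
    obtain ⟨m, hm, rfl⟩ := hx
    exact (t_comm n (3 + m) n (by omega) (by omega)).symm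
  rw [hk, hQ]
  exact swap2 _ _ _ _ hbn.eq hRn.eq
end
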